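/- arXiv:2603.08330 — 13 statements merged into one kernel-verified Lean document; each statement's English description precedes it below -/
import Mathlib

section
/- Let 𝔤 be a Lie algebra over ℝ and let X, Y, T ∈ 𝔤 be linearly independent elements. Suppose there exist real numbers a₁, b₁, a₂, b₂, a₃, b₃, c with c ≠ 0 such that [X,T] = a₁X + b₁Y, [Y,T] = a₂X + b₂Y, and [X,Y] = a₃X + b₃Y + cT. Then a₁b₃ − a₃b₁ = 0, a₂b₃ − a₃b₂ = 0, and a₁ + b₂ = 0. -/
/-- Structure-constant relations forced by the Jacobi identity
(Proposition 2.1 of the paper). -/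
theorem lie_bracket_structure_constants
    (L : Type*) [LieRing L] [LieAlgebra ℝ L]
    (X Y T : L) (hind : LinearIndependent ℝ ![X, Y, T])
    (a₁ b₁ a₂ b₂ a₃ b₃ c : ℝ) (hc : c ≠ 0)
    (hXT : ⁅X, T⁆ = a₁ • X + b₁ • Y)
    (hYT : ⁅Y, T⁆ = a₂ • X + b₂ • Y)
    (hXY : ⁅X, Y⁆ = a₃ • X + b₃ • Y + c • T) :
    a₁ * b₃ - a₃ * b₁ = 0 ∧ a₂ * b₃ - a₃ * b₂ = 0 ∧ a₁ + b₂ = 0 := by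
  have hYX : ⁅Y, X⁆ = -(a₃ • X + b₃ • Y + c • T) := by
    rw [← lie_skew, hXY]
  have jac : ⁅⁅X, Y⁆, T⁆ = ⁅X, ⁅Y, T⁆⁆ - ⁅Y, ⁅X, T⁆⁆ := lie_lie X Y T
  rw [hYT, hXY, hXT] at jac
  simp only [lie_add, add_lie, lie_smul, smul_lie, lie_self, smul_zero,
    hXT, hYT, hXY, hYX] at jac
  have key : (a₂ * b₃ - a₃ * b₂) • X + (a₃ * b₁ - a₁ * b₃) • Y
      + (-((a₁ + b₂) * c)) • T = 0 := by
    have := sub_eq_zero.mpr jac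
    rw [← this]
    module
  have h3 := Fintype.linearIndependent_iff.mp hind
    ![a₂ * b₃ - a₃ * b₂, a₃ * b₁ - a₁ * b₃, -((a₁ + b₂) * c)]
    (by simpa [Fin.sum_univ_three] using key)
  have e0 := h3 0
  have e1 := h3 1
  have e2 := h3 2
  simp only [Matrix.cons_val_zero, Matrix.cons_val_one, Matrix.head_cons,
    Matrix.cons_val_two, Matrix.tail_cons] at e0 e1 e2
  refine ⟨by linarith, e0, ?_⟩
  have : (a₁ + b₂) * c = 0 := by linarith
  rcases mul_eq_zero.mp this with h | h
  · exact h
  · exact absurd h hc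
end

section
/- Let u : ℝ³ → ℝ be C², let δ > 0, let D_δ(x,y,t) = (δx, δy, δ²t), and define u′ = u ∘ D_{1/δ}. If p ∈ ℝ³ satisfies ‖∇_H u(p)‖ ≠ 0, then ‖∇_H u′(D_δ(p))‖ ≠ 0 and the horizontal Gauss curvatures satisfy K_{u′}(D_δ(p)) = (1/δ²) K_u(p). -/
/-- The Heisenberg vector field `X = ∂ₓ + 2y ∂ₜ` applied to `u`. -/
noncomputable def Xd (u : ℝ × ℝ × ℝ → ℝ) (p : ℝ × ℝ × ℝ) : ℝ :=
  fderiv ℝ u p (1, 0, 2 * p.2.1)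

/-- The Heisenberg vector field `Y = ∂_y − 2x ∂ₜ` applied to `u`. -/
noncomputable def Yd (u : ℝ × ℝ × ℝ → ℝ) (p : ℝ × ℝ × ℝ) : ℝ :=
  fderiv ℝ u p (0, 1, -(2 * p.1))

/-- The Reeb vector field `T = ∂ₜ` applied to `u`. -/
noncomputable def Td (u : ℝ × ℝ × ℝ → ℝ) (p : ℝ × ℝ × ℝ) : ℝ :=
  fderiv ℝ u p (0, 0, 1)

/-- The norm of the horizontal gradient `‖∇_H u‖ = √((Xu)² + (Yu)²)`. -/
noncomputable def gradH (u : ℝ × ℝ × ℝ → ℝ) (p : ℝ × ℝ × ℝ) : ℝ :=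
  Real.sqrt ((Xd u p) ^ 2 + (Yd u p) ^ 2)

/-- The horizontal mean curvature `H_u = X(Xu/‖∇_H u‖) + Y(Yu/‖∇_H u‖)`. -/
noncomputable def Hmean (u : ℝ × ℝ × ℝ → ℝ) (p : ℝ × ℝ × ℝ) : ℝ :=
  Xd (fun z => Xd u z / gradH u z) p + Yd (fun z => Yd u z / gradH u z) p

/-- The derivative along `E₁ = −q̄·X + p̄·Y` of a function `v`. -/
noncomputable def E1d (u v : ℝ × ℝ × ℝ → ℝ) (p : ℝ × ℝ × ℝ) : ℝ :=
  -(Yd u p / gradH u p) * Xd v p + (Xd u p / gradH u p) * Yd v p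

/-- The horizontal Gauss curvature `K_u = −4E₁(Tu/‖∇_H u‖) − 16(Tu/‖∇_H u‖)²`. -/
noncomputable def Kgauss (u : ℝ × ℝ × ℝ → ℝ) (p : ℝ × ℝ × ℝ) : ℝ :=
  -4 * E1d u (fun z => Td u z / gradH u z) p - 16 * (Td u p / gradH u p) ^ 2

/-- The symplectic distortion `Q_u = X(Yu/‖∇_H u‖) − Y(Xu/‖∇_H u‖)`. -/
noncomputable def Qdist (u : ℝ × ℝ × ℝ → ℝ) (p : ℝ × ℝ × ℝ) : ℝ :=
  Xd (fun z => Yd u z / gradH u z) p - Yd (fun z => Xd u z / gradH u z) p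

/-- The Heisenberg dilation `D_δ(x,y,t) = (δx, δy, δ²t)`. -/
def Ddil (δ : ℝ) (p : ℝ × ℝ × ℝ) : ℝ × ℝ × ℝ :=
  (δ * p.1, δ * p.2.1, δ ^ 2 * p.2.2)

/-! Since `D_c` is a linear isomorphism, `fderiv (u ∘ D_c) z = fderiv u (D_c z) ∘ D_c`. It
multiplies the horizontal fields `X`, `Y` by `c` and `T` by `c²`; hence `Tu/‖∇_H u‖` picks up
one factor `c` while the horizontal frame `(p̄, q̄)` is unchanged, and both terms of `K_u` pick up `c²`. -/

lemma ddil_inv_ddil {c : ℝ} (hc : c ≠ 0) (p : ℝ × ℝ × ℝ) : Ddil c⁻¹ (Ddil c p) = p := by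
  simp only [Ddil, Prod.ext_iff]
  refine ⟨?_, ?_, ?_⟩ <;> field_simp

lemma ddil_ddil_inv {c : ℝ} (hc : c ≠ 0) (p : ℝ × ℝ × ℝ) : Ddil c (Ddil c⁻¹ p) = p := by
  simpa using ddil_inv_ddil (inv_ne_zero hc) p

noncomputable def ddilEquiv {c : ℝ} (hc : c ≠ 0) : (ℝ × ℝ × ℝ) ≃L[ℝ] (ℝ × ℝ × ℝ) :=
  LinearEquiv.toContinuousLinearEquiv
    { toFun := Ddil c
      invFun := Ddil c⁻¹
      map_add' := fun p q => by
        ext <;> simp only [Ddil, Prod.fst_add, Prod.snd_add] <;> ring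
      map_smul' := fun a p => by
        ext <;> simp only [Ddil, Prod.smul_fst, Prod.smul_snd, smul_eq_mul, RingHom.id_apply] <;> ring
      left_inv := ddil_inv_ddil hc
      right_inv := ddil_ddil_inv hc }

lemma fderiv_comp_ddil (v : ℝ × ℝ × ℝ → ℝ) {c : ℝ} (hc : c ≠ 0) (z w : ℝ × ℝ × ℝ) :
    fderiv ℝ (fun z => v (Ddil c z)) z w = fderiv ℝ v (Ddil c z) (Ddil c w) :=
  congrArg (· w) ((ddilEquiv hc).comp_right_fderiv (f := v) (x := z))

lemma Xd_comp_ddil (v : ℝ × ℝ × ℝ → ℝ) {c : ℝ} (hc : c ≠ 0) (z : ℝ × ℝ × ℝ) :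
    Xd (fun z => v (Ddil c z)) z = c * Xd v (Ddil c z) := by
  have hv : Ddil c (1, 0, 2 * z.2.1) = c • (1, 0, 2 * (Ddil c z).2.1) := by
    ext <;> simp only [Ddil, Prod.smul_fst, Prod.smul_snd, smul_eq_mul]
    ring
  rw [Xd, Xd, fderiv_comp_ddil v hc, hv, map_smul, smul_eq_mul]

lemma Yd_comp_ddil (v : ℝ × ℝ × ℝ → ℝ) {c : ℝ} (hc : c ≠ 0) (z : ℝ × ℝ × ℝ) :
    Yd (fun z => v (Ddil c z)) z = c * Yd v (Ddil c z) := by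
  have hv : Ddil c (0, 1, -(2 * z.1)) = c • (0, 1, -(2 * (Ddil c z).1)) := by
    ext <;> simp only [Ddil, Prod.smul_fst, Prod.smul_snd, smul_eq_mul]
    ring
  rw [Yd, Yd, fderiv_comp_ddil v hc, hv, map_smul, smul_eq_mul]

lemma Td_comp_ddil (v : ℝ × ℝ × ℝ → ℝ) {c : ℝ} (hc : c ≠ 0) (z : ℝ × ℝ × ℝ) :
    Td (fun z => v (Ddil c z)) z = c ^ 2 * Td v (Ddil c z) := by
  have hv : Ddil c (0, 0, 1) = c ^ 2 • (0, 0, 1) := by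
    ext <;> simp only [Ddil, Prod.smul_fst, Prod.smul_snd, smul_eq_mul] <;> ring
  rw [Td, Td, fderiv_comp_ddil v hc, hv, map_smul, smul_eq_mul]

lemma gradH_comp_ddil (v : ℝ × ℝ × ℝ → ℝ) {c : ℝ} (hc : 0 < c) (z : ℝ × ℝ × ℝ) :
    gradH (fun z => v (Ddil c z)) z = c * gradH v (Ddil c z) := by
  rw [gradH, gradH, Xd_comp_ddil v hc.ne', Yd_comp_ddil v hc.ne', mul_pow, mul_pow, ← mul_add,
    Real.sqrt_mul (sq_nonneg c), Real.sqrt_sq hc.le]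

lemma Xd_const_mul (a : ℝ) (g : ℝ × ℝ × ℝ → ℝ) (z : ℝ × ℝ × ℝ) :
    Xd (fun z => a * g z) z = a * Xd g z := by
  rw [Xd, Xd, show (fun z => a * g z) = a • g from rfl, fderiv_const_smul_field]
  rfl

lemma Yd_const_mul (a : ℝ) (g : ℝ × ℝ × ℝ → ℝ) (z : ℝ × ℝ × ℝ) :
    Yd (fun z => a * g z) z = a * Yd g z := by
  rw [Yd, Yd, show (fun z => a * g z) = a • g from rfl, fderiv_const_smul_field]
  rfl

lemma E1d_const_mul (u g : ℝ × ℝ × ℝ → ℝ) (a : ℝ) (z : ℝ × ℝ × ℝ) :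
    E1d u (fun z => a * g z) z = a * E1d u g z := by
  rw [E1d, E1d, Xd_const_mul, Yd_const_mul]
  ring

lemma E1d_comp_ddil (v g : ℝ × ℝ × ℝ → ℝ) {c : ℝ} (hc : 0 < c) (z : ℝ × ℝ × ℝ) :
    E1d (fun z => v (Ddil c z)) (fun z => g (Ddil c z)) z = c * E1d v g (Ddil c z) := by
  rw [E1d, E1d, Xd_comp_ddil v hc.ne', Yd_comp_ddil v hc.ne', Xd_comp_ddil g hc.ne',
    Yd_comp_ddil g hc.ne', gradH_comp_ddil v hc, mul_div_mul_left _ _ hc.ne',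
    mul_div_mul_left _ _ hc.ne']
  ring

lemma Td_div_gradH_comp_ddil (v : ℝ × ℝ × ℝ → ℝ) {c : ℝ} (hc : 0 < c) (z : ℝ × ℝ × ℝ) :
    Td (fun z => v (Ddil c z)) z / gradH (fun z => v (Ddil c z)) z =
      c * (Td v (Ddil c z) / gradH v (Ddil c z)) := by
  rw [Td_comp_ddil v hc.ne', gradH_comp_ddil v hc, pow_two, mul_assoc, mul_div_mul_left _ _ hc.ne',
    mul_div_assoc]

lemma kgauss_comp_ddil (v : ℝ × ℝ × ℝ → ℝ) {c : ℝ} (hc : 0 < c) (z : ℝ × ℝ × ℝ) :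
    Kgauss (fun z => v (Ddil c z)) z = c ^ 2 * Kgauss v (Ddil c z) := by
  simp only [Kgauss, Td_div_gradH_comp_ddil v hc]
  rw [E1d_const_mul, E1d_comp_ddil v (fun y => Td v y / gradH v y) hc]
  ring

theorem kgauss_dilation_scaling_general (u : ℝ × ℝ × ℝ → ℝ)
    (δ : ℝ) (hδ : 0 < δ) (p : ℝ × ℝ × ℝ) (hp : gradH u p ≠ 0) :
    gradH (fun z => u (Ddil δ⁻¹ z)) (Ddil δ p) ≠ 0 ∧
    Kgauss (fun z => u (Ddil δ⁻¹ z)) (Ddil δ p) = (1 / δ ^ 2) * Kgauss u p := by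
  have hδinv : 0 < δ⁻¹ := inv_pos.2 hδ
  rw [gradH_comp_ddil u hδinv, kgauss_comp_ddil u hδinv, ddil_inv_ddil hδ.ne', one_div, inv_pow]
  exact ⟨mul_ne_zero hδinv.ne' hp, rfl⟩

/-- Horizontal Gauss curvature scales by `1/δ²` under the dilation `D_δ`. -/
theorem kgauss_dilation_scaling (u : ℝ × ℝ × ℝ → ℝ) (hu : ContDiff ℝ 2 u)
    (δ : ℝ) (hδ : 0 < δ) (p : ℝ × ℝ × ℝ) (hp : gradH u p ≠ 0) :
    gradH (fun z => u (Ddil δ⁻¹ z)) (Ddil δ p) ≠ 0 ∧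
    Kgauss (fun z => u (Ddil δ⁻¹ z)) (Ddil δ p) = (1 / δ ^ 2) * Kgauss u p :=
  kgauss_dilation_scaling_general u δ hδ p hp
end

section
/- Let U ⊆ ℝ³ be open and let u : U → ℝ be C² with ‖∇_H u‖ > 0 on U. Then at every point of U the identity −4·Tu/‖∇_H u‖ = (X(q̄) − Y(p̄)) − E₁(log ‖∇_H u‖) holds, where p̄ = Xu/‖∇_H u‖, q̄ = Yu/‖∇_H u‖ and E₁ = −q̄·X + p̄·Y. In particular, −4·Tu/‖∇_H u‖ is expressible purely in terms of horizontal derivatives of u. -/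
/-!
With `W = ‖∇_H u‖`, the quotient rule gives
`X(Yu/W) − Y(Xu/W) = (XYu − YXu)/W − (Yu·XW − Xu·YW)/W²`,
and the last term is exactly `E₁(log W)`. What remains is `[X,Y]u/W = −4·Tu/W`, where the
commutator is computed from the symmetry of the second derivative of the `C²` function `u`.
-/

section DirectionalDerivatives

variable {E : Type*} [NormedAddCommGroup E] [NormedSpace ℝ E] {f g : E → ℝ} {x : E}

theorem fderiv_div_apply (hf : DifferentiableAt ℝ f x) (hg : DifferentiableAt ℝ g x)
    (hx : g x ≠ 0) (v : E) :
    fderiv ℝ (fun z => f z / g z) x v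
      = (fderiv ℝ f x v * g x - f x * fderiv ℝ g x v) / g x ^ 2 := by
  have h : HasFDerivAt (fun z => f z * (g z)⁻¹) _ x :=
    hf.hasFDerivAt.mul ((hasDerivAt_inv hx).comp_hasFDerivAt x hg.hasFDerivAt)
  simp only [div_eq_mul_inv]
  rw [h.fderiv]
  simp
  field_simp
  ring

theorem fderiv_log_apply (hg : DifferentiableAt ℝ g x) (hx : g x ≠ 0) (v : E) :
    fderiv ℝ (fun z => Real.log (g z)) x v = fderiv ℝ g x v / g x := by
  rw [fderiv.log hg hx]
  simp [div_eq_inv_mul]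

end DirectionalDerivatives

section HeisenbergFields

variable {u f g : ℝ × ℝ × ℝ → ℝ} {p : ℝ × ℝ × ℝ}

theorem Xd_div (hf : DifferentiableAt ℝ f p) (hg : DifferentiableAt ℝ g p) (hp : g p ≠ 0) :
    Xd (fun z => f z / g z) p = (Xd f p * g p - f p * Xd g p) / g p ^ 2 :=
  fderiv_div_apply hf hg hp _

theorem Yd_div (hf : DifferentiableAt ℝ f p) (hg : DifferentiableAt ℝ g p) (hp : g p ≠ 0) :
    Yd (fun z => f z / g z) p = (Yd f p * g p - f p * Yd g p) / g p ^ 2 :=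
  fderiv_div_apply hf hg hp _

theorem Xd_log (hg : DifferentiableAt ℝ g p) (hp : g p ≠ 0) :
    Xd (fun z => Real.log (g z)) p = Xd g p / g p :=
  fderiv_log_apply hg hp _

theorem Yd_log (hg : DifferentiableAt ℝ g p) (hp : g p ≠ 0) :
    Yd (fun z => Real.log (g z)) p = Yd g p / g p :=
  fderiv_log_apply hg hp _

theorem differentiableAt_Xd (hu : DifferentiableAt ℝ (fderiv ℝ u) p) :
    DifferentiableAt ℝ (Xd u) p :=
  hu.clm_apply (by fun_prop)

theorem differentiableAt_Yd (hu : DifferentiableAt ℝ (fderiv ℝ u) p) :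
    DifferentiableAt ℝ (Yd u) p :=
  hu.clm_apply (by fun_prop)

theorem differentiableAt_gradH (hu : DifferentiableAt ℝ (fderiv ℝ u) p) (hp : 0 < gradH u p) :
    DifferentiableAt ℝ (gradH u) p :=
  (((differentiableAt_Xd hu).pow 2).add ((differentiableAt_Yd hu).pow 2)).sqrt
    (Real.sqrt_pos.mp hp).ne'

theorem Xd_Yd_sub_Yd_Xd (hu : ContDiffAt ℝ 2 u p) :
    Xd (Yd u) p - Yd (Xd u) p = -4 * Td u p := by
  have hF : DifferentiableAt ℝ (fderiv ℝ u) p :=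
    (hu.fderiv_right (m := 1) le_rfl).differentiableAt one_ne_zero
  have hsymm := hu.isSymmSndFDerivAt (by simp [minSmoothness_of_isRCLikeNormedField])
  have hy_coord := (hasFDerivAt_snd (p := p) (𝕜 := ℝ)).fst
  have hDX :
      fderiv ℝ (fun z : ℝ × ℝ × ℝ => ((1 : ℝ), (0 : ℝ), 2 * z.2.1)) p (0, 1, -(2 * p.1))
        = (2 : ℝ) • (0, 0, 1) := by
    simp (disch := fun_prop) [DifferentiableAt.fderiv_prodMk, fderiv_const_mul, hy_coord.fderiv]
  have hDY :
      fderiv ℝ (fun z : ℝ × ℝ × ℝ => ((0 : ℝ), (1 : ℝ), -(2 * z.1))) p (1, 0, 2 * p.2.1)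
        = (-2 : ℝ) • (0, 0, 1) := by
    simp (disch := fun_prop)
      [DifferentiableAt.fderiv_prodMk, fderiv_fun_neg, fderiv_const_mul, fderiv_fst]
  unfold Xd Yd Td
  rw [fderiv_clm_apply hF (by fun_prop), fderiv_clm_apply hF (by fun_prop)]
  simp only [add_apply, ContinuousLinearMap.comp_apply,
    ContinuousLinearMap.flip_apply, hDX, hDY, map_smul, smul_eq_mul, hsymm (1, 0, 2 * p.2.1)]
  ring

end HeisenbergFields

/-- The Heisenberg instance of the key identity in the proof of the
Horizontal Theorema Egregium:
`−4·Tu/‖∇_H u‖ = (X(q̄) − Y(p̄)) − E₁(log ‖∇_H u‖)`. -/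
theorem horizontal_theorema_egregium_identity
    (U : Set (ℝ × ℝ × ℝ)) (hU : IsOpen U) (u : ℝ × ℝ × ℝ → ℝ)
    (hu : ContDiffOn ℝ 2 u U) (hgrad : ∀ p ∈ U, 0 < gradH u p) :
    ∀ p ∈ U, -4 * (Td u p / gradH u p) =
      Qdist u p - E1d u (fun z => Real.log (gradH u z)) p := by
  intro p hp
  have hu2 : ContDiffAt ℝ 2 u p := hu.contDiffAt (hU.mem_nhds hp)
  have hF : DifferentiableAt ℝ (fderiv ℝ u) p :=
    (hu2.fderiv_right (m := 1) le_rfl).differentiableAt one_ne_zero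
  have hX := differentiableAt_Xd hF
  have hY := differentiableAt_Yd hF
  have hW := differentiableAt_gradH hF (hgrad p hp)
  have hW0 := (hgrad p hp).ne'
  rw [Qdist, E1d, Xd_div hY hW hW0, Yd_div hX hW hW0, Xd_log hW hW0, Yd_log hW hW0]
  field_simp
  linear_combination -gradH u p * Xd_Yd_sub_Yd_Xd hu2
end

section
/- Let f be a C² real function defined on an open interval I ⊆ (0,∞). Then for every r ∈ I the horizontal mean curvature and the horizontal Gauss curvature of the surface of revolution t = f(√(x²+y²)) in the Heisenberg group satisfy the sharp inequality H(r)² − K(r) > 0, where H(r) = −(4r³ f''(r) + f'(r)³)/(r (4r² + f'(r)²)^{3/2}) and K(r) = (4r(8r + 2f'(r)f''(r)) − 16(4r² + f'(r)²))/(4r² + f'(r)²)². -/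
/-- Sharp inequality `H² − K > 0` for surfaces of revolution `t = f(√(x²+y²))`
in the Heisenberg group. -/
theorem hmean_sq_sub_kgauss_pos (I : Set ℝ) (hI : I ⊆ Set.Ioi (0 : ℝ))
    (hIopen : IsOpen I) (f : ℝ → ℝ) (hf : ContDiffOn ℝ 2 f I) :
    ∀ r ∈ I,
      (-(4 * r ^ 3 * deriv (deriv f) r + (deriv f r) ^ 3) /
          (r * (4 * r ^ 2 + (deriv f r) ^ 2) ^ ((3 : ℝ) / 2))) ^ 2 -
        (4 * r * (8 * r + 2 * deriv f r * deriv (deriv f) r) -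
            16 * (4 * r ^ 2 + (deriv f r) ^ 2)) /
          (4 * r ^ 2 + (deriv f r) ^ 2) ^ 2 > 0 := by
  intro r hrI
  have hr : 0 < r := hI hrI
  set a := deriv f r with ha
  set b := deriv (deriv f) r with hb
  have hD : 0 < 4 * r ^ 2 + a ^ 2 := by positivity
  have hpow : ((4 * r ^ 2 + a ^ 2) ^ ((3 : ℝ) / 2)) ^ 2 = (4 * r ^ 2 + a ^ 2) ^ 3 := by
    rw [← Real.rpow_natCast ((4 * r ^ 2 + a ^ 2) ^ ((3 : ℝ) / 2)) 2,
      ← Real.rpow_mul hD.le]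
    have h32 : (3 : ℝ) / 2 * ((2 : ℕ) : ℝ) = ((3 : ℕ) : ℝ) := by norm_num
    rw [h32, Real.rpow_natCast]
  have hDpow : 0 < (4 * r ^ 2 + a ^ 2) ^ ((3 : ℝ) / 2) := Real.rpow_pos_of_pos hD _
  have key :
      (-(4 * r ^ 3 * b + a ^ 3) / (r * (4 * r ^ 2 + a ^ 2) ^ ((3 : ℝ) / 2))) ^ 2 -
        (4 * r * (8 * r + 2 * a * b) - 16 * (4 * r ^ 2 + a ^ 2)) /
          (4 * r ^ 2 + a ^ 2) ^ 2 =
      (16 * r ^ 4 * (r * b - a) ^ 2 + 80 * r ^ 4 * a ^ 2 + 16 * r ^ 2 * a ^ 4 +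
          a ^ 6 + 128 * r ^ 6) / (r ^ 2 * (4 * r ^ 2 + a ^ 2) ^ 3) := by
    rw [div_pow, mul_pow, hpow]
    field_simp
    ring
  rw [key]
  positivity
end

section
/- Let k ≠ 0 be a real constant and let f be a C² real function on an open interval I ⊆ (0,∞). Then f satisfies 8(r f'(r) f''(r) − 2 f'(r)² − 4r²) = k (4r² + f'(r)²)² for all r ∈ I (equivalently, the surface of revolution t = f(√(x²+y²)) in the Heisenberg group has constant horizontal Gauss curvature k on I) if and only if there exists a constant C ∈ ℝ such that for all r ∈ I one has C − k r⁴ > 0 and (C − k r⁴)(4r² + f'(r)²) = 16 r⁴. -/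
/-!
With `u = 4r² + f'²` one has `u' = 8r + 2f'f''`, and the curvature equation becomes the
Riccati-type equation `4r u' - 16u = k u²`. Dividing by `u²` shows that it says exactly that
`16r⁴/u + k r⁴` has vanishing derivative, so on an interval it is equivalent to
`16r⁴/u + k r⁴ = C`, i.e. `(C - k r⁴) u = 16 r⁴`.
-/

open Set

theorem IsOpen.exists_forall_eq_iff_hasDerivAt_zero {𝕜 G : Type*} [RCLike 𝕜]
    [NormedAddCommGroup G] [NormedSpace 𝕜 G] {s : Set 𝕜} {φ φ' : 𝕜 → G}
    (hs : IsOpen s) (hs' : IsPreconnected s) (hφ : ∀ x ∈ s, HasDerivAt φ (φ' x) x) :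
    (∃ C, ∀ x ∈ s, φ x = C) ↔ ∀ x ∈ s, φ' x = 0 := by
  constructor
  · rintro ⟨C, hC⟩ x hx
    have h_const : φ =ᶠ[nhds x] fun _ => C :=
      Filter.eventually_of_mem (hs.mem_nhds hx) hC
    exact (hφ x hx).unique ((hasDerivAt_const x C).congr_of_eventuallyEq h_const)
  · intro h
    refine hs.exists_is_const_of_deriv_eq_zero hs' (fun x hx => ?_) (fun x hx => ?_)
    · exact (hφ x hx).differentiableAt.differentiableWithinAt
    · simp [(hφ x hx).deriv, h x hx]

noncomputable def riccatiFirstIntegral (k : ℝ) (u : ℝ → ℝ) (x : ℝ) : ℝ :=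
  16 * x ^ 4 / u x + k * x ^ 4

theorem hasDerivAt_riccatiFirstIntegral {k u' x : ℝ} {u : ℝ → ℝ} (hu : HasDerivAt u u' x)
    (hux : u x ≠ 0) :
    HasDerivAt (riccatiFirstIntegral k u)
      (4 * x ^ 3 * (k * u x ^ 2 - (4 * x * u' - 16 * u x)) / u x ^ 2) x := by
  have h_num : HasDerivAt (fun x : ℝ => 16 * x ^ 4) (16 * (4 * x ^ 3)) x := by
    simpa using (hasDerivAt_pow 4 x).const_mul (16 : ℝ)
  have h_quartic : HasDerivAt (fun x : ℝ => k * x ^ 4) (k * (4 * x ^ 3)) x := by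
    simpa using (hasDerivAt_pow 4 x).const_mul k
  refine ((h_num.fun_div hu hux).fun_add h_quartic).congr_deriv ?_
  field_simp
  ring

theorem riccatiFirstIntegral_eq_iff {k C x : ℝ} {u : ℝ → ℝ} (hx : 0 < x) (hux : 0 < u x) :
    riccatiFirstIntegral k u x = C ↔ C - k * x ^ 4 > 0 ∧ (C - k * x ^ 4) * u x = 16 * x ^ 4 := by
  have h_sub : riccatiFirstIntegral k u x = C ↔ C - k * x ^ 4 = 16 * x ^ 4 / u x := by
    unfold riccatiFirstIntegral
    constructor <;> intro h <;> linarith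
  rw [h_sub, eq_div_iff hux.ne']
  refine ⟨fun h => ⟨?_, h⟩, And.right⟩
  exact pos_of_mul_pos_left (h ▸ by positivity) hux.le

theorem riccati_iff_exists_riccatiFirstIntegral_eq {k : ℝ} {s : Set ℝ} {u u' : ℝ → ℝ}
    (hs : IsOpen s) (hs' : IsPreconnected s) (hpos : ∀ x ∈ s, 0 < x)
    (hu : ∀ x ∈ s, HasDerivAt u (u' x) x) (hupos : ∀ x ∈ s, 0 < u x) :
    (∀ x ∈ s, 4 * x * u' x - 16 * u x = k * u x ^ 2) ↔
      ∃ C, ∀ x ∈ s, C - k * x ^ 4 > 0 ∧ (C - k * x ^ 4) * u x = 16 * x ^ 4 := by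
  have h_first_integral := hs.exists_forall_eq_iff_hasDerivAt_zero hs'
    fun x hx => hasDerivAt_riccatiFirstIntegral (k := k) (hu x hx) (hupos x hx).ne'
  rw [← exists_congr fun C => forall₂_congr fun x hx =>
    riccatiFirstIntegral_eq_iff (C := C) (hpos x hx) (hupos x hx), h_first_integral]
  refine forall₂_congr fun x hx => ?_
  have hx3 : 4 * x ^ 3 ≠ 0 := by have := hpos x hx; positivity
  have hu2 : u x ^ 2 ≠ 0 := by have := hupos x hx; positivity
  rw [div_eq_zero_iff, mul_eq_zero, sub_eq_zero, eq_comm]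
  simp only [hx3, hu2, false_or, or_false]

theorem constant_horizontal_gauss_curvature_revolution_general
    (k : ℝ) (a b : ℝ) (ha : 0 ≤ a) (f : ℝ → ℝ)
    (hf : ContDiffOn ℝ 2 f (Set.Ioo a b)) :
    (∀ r ∈ Set.Ioo a b,
        8 * (r * deriv f r * deriv (deriv f) r - 2 * (deriv f r) ^ 2 - 4 * r ^ 2) =
          k * (4 * r ^ 2 + (deriv f r) ^ 2) ^ 2) ↔
      ∃ C : ℝ, ∀ r ∈ Set.Ioo a b,
        C - k * r ^ 4 > 0 ∧
        (C - k * r ^ 4) * (4 * r ^ 2 + (deriv f r) ^ 2) = 16 * r ^ 4 := by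
  have hpos : ∀ r ∈ Ioo a b, 0 < r := fun r hr => ha.trans_lt hr.1
  have hf' : ∀ r ∈ Ioo a b, HasDerivAt (deriv f) (deriv (deriv f) r) r := fun r hr =>
    ((hf.deriv_of_isOpen isOpen_Ioo (by norm_num)).differentiableOn one_ne_zero
      |>.differentiableAt (isOpen_Ioo.mem_nhds hr)).hasDerivAt
  have hu : ∀ r ∈ Ioo a b, HasDerivAt (fun x => 4 * x ^ 2 + deriv f x ^ 2)
      (8 * r + 2 * deriv f r * deriv (deriv f) r) r := fun r hr => by
    refine (((hasDerivAt_pow 2 r).const_mul 4).fun_add ((hf' r hr).fun_pow 2)).congr_deriv ?_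
    push_cast
    ring
  have hupos : ∀ r ∈ Ioo a b, 0 < 4 * r ^ 2 + deriv f r ^ 2 := fun r hr => by
    have := hpos r hr; positivity
  rw [← riccati_iff_exists_riccatiFirstIntegral_eq isOpen_Ioo isPreconnected_Ioo hpos hu hupos]
  refine forall₂_congr fun r _ => ?_
  constructor <;> intro h <;> linear_combination h

/-- First integral of the constant horizontal Gauss curvature equation for
surfaces of revolution `t = f(√(x²+y²))` in the Heisenberg group, `k ≠ 0`. -/
theorem constant_horizontal_gauss_curvature_revolution
    (k : ℝ) (hk : k ≠ 0) (a b : ℝ) (ha : 0 ≤ a) (f : ℝ → ℝ)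
    (hf : ContDiffOn ℝ 2 f (Set.Ioo a b)) :
    (∀ r ∈ Set.Ioo a b,
        8 * (r * deriv f r * deriv (deriv f) r - 2 * (deriv f r) ^ 2 - 4 * r ^ 2) =
          k * (4 * r ^ 2 + (deriv f r) ^ 2) ^ 2) ↔
      ∃ C : ℝ, ∀ r ∈ Set.Ioo a b,
        C - k * r ^ 4 > 0 ∧
        (C - k * r ^ 4) * (4 * r ^ 2 + (deriv f r) ^ 2) = 16 * r ^ 4 :=
  constant_horizontal_gauss_curvature_revolution_general k a b ha f hf
end

section
/- Let f be a C² real function on an open interval I ⊆ (0,∞). Then f satisfies 4r³ f''(r) + f'(r)³ = 0 for all r ∈ I (equivalently, the surface of revolution t = f(√(x²+y²)) in the Heisenberg group is horizontally minimal, i.e., has horizontal mean curvature identically zero on I) if and only if there exist constants C, C′ ∈ ℝ such that for all r ∈ I one has C² < 16 r² and (f(r) − C′)² = (C²/64)(16 r² − C²). -/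
/-!
Write `g = f'`. Where `g ≠ 0` the equation `4 r³ g' + g³ = 0` separates as `(g⁻²)' = (2 r³)⁻¹`,
so `g⁻² + (4 r²)⁻¹` is constant. Its reciprocal `4 r² g² / (4 r² + g²)` stays smooth where `g`
vanishes and is conserved on the whole interval; calling its value `C² / 4` gives
`g² = C² (2 r / √(16 r² - C²))²`. As `g` is continuous and `2 r / √(16 r² - C²)` has no zero,
connectedness forces `g = D · 2 r / √(16 r² - C²)` with a constant `D = ±C`, and integrating gives
`f = C' + D √(16 r² - C²) / 8`. Conversely, the same connectedness argument brings any `f` with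
`(f - C')² = C² (16 r² - C²) / 64` to this form, and these functions solve the equation.
-/

open Set

theorem IsPreconnected.exists_eqOn_mul_of_sq_eq {α 𝕜 : Type*} [TopologicalSpace α]
    [Field 𝕜] [TopologicalSpace 𝕜] [T1Space 𝕜] [ContinuousInv₀ 𝕜] [ContinuousMul 𝕜]
    {S : Set α} {f g : α → 𝕜} {c : 𝕜} (hS : IsPreconnected S) (hf : ContinuousOn f S)
    (hg : ContinuousOn g S) (hg₀ : ∀ x ∈ S, g x ≠ 0) (hsq : ∀ x ∈ S, f x ^ 2 = c ^ 2 * g x ^ 2) :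
    ∃ d, d ^ 2 = c ^ 2 ∧ ∀ x ∈ S, f x = d * g x := by
  have hmaps : MapsTo (fun x => f x / g x) S {c, -c} := fun x hx => by
    have : (f x / g x) ^ 2 = c ^ 2 := by
      rw [div_pow, hsq x hx, mul_div_cancel_right₀ _ (pow_ne_zero 2 (hg₀ x hx))]
    simpa [sq_eq_sq_iff_eq_or_eq_neg] using this
  obtain ⟨d, hd, hconst⟩ := hS.eqOn_const_of_mapsTo (toFinite _).isDiscrete
    (hf.div hg hg₀) hmaps (insert_nonempty _ _)
  refine ⟨d, ?_, fun x hx => ?_⟩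
  · rcases hd with rfl | rfl <;> simp
  · rw [← div_eq_iff (hg₀ x hx)]
    exact hconst hx

theorem exists_eqOn_const_of_hasDerivAt_zero {F : ℝ → ℝ} {s : Set ℝ} (hs : IsOpen s)
    (hs' : IsPreconnected s) (hF : ∀ x ∈ s, HasDerivAt F 0 x) : ∃ c, ∀ x ∈ s, F x = c :=
  hs.exists_is_const_of_deriv_eq_zero hs'
    (fun x hx => (hF x hx).differentiableAt.differentiableWithinAt) (fun x hx => (hF x hx).deriv)

noncomputable def minimalProfile (C r : ℝ) : ℝ := √(16 * r ^ 2 - C ^ 2) / 8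

noncomputable def minimalProfileDeriv (C r : ℝ) : ℝ := 2 * r / √(16 * r ^ 2 - C ^ 2)

section MinimalProfile

variable {C r : ℝ}

theorem continuous_minimalProfile : Continuous (minimalProfile C) := by
  unfold minimalProfile
  fun_prop

theorem minimalProfile_sq (h : C ^ 2 ≤ 16 * r ^ 2) :
    minimalProfile C r ^ 2 = (16 * r ^ 2 - C ^ 2) / 64 := by
  rw [minimalProfile, div_pow, Real.sq_sqrt (by linarith)]
  norm_num

theorem minimalProfile_pos (h : C ^ 2 < 16 * r ^ 2) : 0 < minimalProfile C r :=
  div_pos (Real.sqrt_pos.2 (by linarith)) (by norm_num)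

theorem minimalProfileDeriv_ne_zero (h : C ^ 2 < 16 * r ^ 2) (hr : r ≠ 0) :
    minimalProfileDeriv C r ≠ 0 :=
  div_ne_zero (by simpa using hr) (Real.sqrt_pos.2 (by linarith)).ne'

theorem hasDerivAt_sixteen_sq_sub (C r : ℝ) :
    HasDerivAt (fun x : ℝ => 16 * x ^ 2 - C ^ 2) (32 * r) r := by
  refine (((hasDerivAt_pow 2 r).const_mul 16).sub_const (C ^ 2)).congr_deriv ?_
  ring

theorem hasDerivAt_minimalProfile (h : C ^ 2 < 16 * r ^ 2) :
    HasDerivAt (minimalProfile C) (minimalProfileDeriv C r) r := by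
  have hs : 0 < √(16 * r ^ 2 - C ^ 2) := Real.sqrt_pos.2 (by linarith)
  refine (((hasDerivAt_sixteen_sq_sub C r).sqrt (by linarith)).div_const 8).congr_deriv ?_
  unfold minimalProfileDeriv
  field_simp
  ring

theorem hasDerivAt_minimalProfileDeriv (h : C ^ 2 < 16 * r ^ 2) :
    HasDerivAt (minimalProfileDeriv C) (-2 * C ^ 2 / √(16 * r ^ 2 - C ^ 2) ^ 3) r := by
  have hpos : 0 < 16 * r ^ 2 - C ^ 2 := by linarith
  have hs : 0 < √(16 * r ^ 2 - C ^ 2) := Real.sqrt_pos.2 hpos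
  have hs2 : √(16 * r ^ 2 - C ^ 2) ^ 2 = 16 * r ^ 2 - C ^ 2 := Real.sq_sqrt hpos.le
  refine (((hasDerivAt_id r).const_mul 2).div
    ((hasDerivAt_sixteen_sq_sub C r).sqrt hpos.ne') hs.ne').congr_deriv ?_
  simp only [id]
  field_simp
  linear_combination 2 * hs2

theorem mul_minimalProfile_ode {D : ℝ} (hD : D ^ 2 = C ^ 2) (h : C ^ 2 < 16 * r ^ 2) :
    4 * r ^ 3 * (D * (-2 * C ^ 2 / √(16 * r ^ 2 - C ^ 2) ^ 3))
      + (D * minimalProfileDeriv C r) ^ 3 = 0 := by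
  have hs : 0 < √(16 * r ^ 2 - C ^ 2) := Real.sqrt_pos.2 (by linarith)
  unfold minimalProfileDeriv
  field_simp
  rw [div_eq_zero_iff]
  left
  linear_combination (8 * r ^ 3 * D) * hD

end MinimalProfile

noncomputable def firstIntegral (r y : ℝ) : ℝ := 4 * r ^ 2 * y ^ 2 / (4 * r ^ 2 + y ^ 2)

theorem firstIntegral_nonneg (r y : ℝ) : 0 ≤ firstIntegral r y := by
  unfold firstIntegral
  positivity

theorem hasDerivAt_firstIntegral {g : ℝ → ℝ} {g' r : ℝ} (hg : HasDerivAt g g' r) (hr : r ≠ 0)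
    (hode : 4 * r ^ 3 * g' + g r ^ 3 = 0) :
    HasDerivAt (fun x => firstIntegral x (g x)) 0 r := by
  have hden : 4 * r ^ 2 + g r ^ 2 ≠ 0 := by positivity
  have hx2 := hasDerivAt_pow 2 r
  refine (((hx2.const_mul 4).mul (hg.pow 2)).div
    ((hx2.const_mul 4).add (hg.pow 2)) hden).congr_deriv ?_
  simp only [Pi.add_apply, Pi.mul_apply, Pi.pow_apply]
  rw [div_eq_zero_iff]
  left
  linear_combination (8 * r * g r) * hode

theorem sq_eq_of_firstIntegral_eq {r y C : ℝ} (hr : 0 < r) (h : firstIntegral r y = C ^ 2 / 4) :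
    C ^ 2 < 16 * r ^ 2 ∧ y ^ 2 = C ^ 2 * minimalProfileDeriv C r ^ 2 := by
  have hden : 0 < 4 * r ^ 2 + y ^ 2 := by positivity
  rw [firstIntegral, div_eq_iff hden.ne'] at h
  have hC : C ^ 2 < 16 * r ^ 2 := by
    by_contra! hC
    nlinarith [mul_nonneg (sub_nonneg.2 hC) hden.le, pow_pos hr 4]
  have hpos : 0 < 16 * r ^ 2 - C ^ 2 := by linarith
  refine ⟨hC, ?_⟩
  rw [minimalProfileDeriv, div_pow, Real.sq_sqrt hpos.le, mul_div_assoc', eq_div_iff hpos.ne']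
  linear_combination 4 * h

section Interval

variable {a b : ℝ} {f : ℝ → ℝ}

theorem exists_sq_deriv_eq_of_ode (hpos : ∀ r ∈ Ioo a b, 0 < r)
    (hf : ContDiffOn ℝ 2 f (Ioo a b))
    (hode : ∀ r ∈ Ioo a b, 4 * r ^ 3 * deriv (deriv f) r + deriv f r ^ 3 = 0) :
    ∃ C, ∀ r ∈ Ioo a b,
      C ^ 2 < 16 * r ^ 2 ∧ deriv f r ^ 2 = C ^ 2 * minimalProfileDeriv C r ^ 2 := by
  have hf' : DifferentiableOn ℝ (deriv f) (Ioo a b) :=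
    (hf.deriv_of_isOpen isOpen_Ioo (by norm_num) : ContDiffOn ℝ 1 _ _).differentiableOn
      one_ne_zero
  obtain ⟨W, hW⟩ := exists_eqOn_const_of_hasDerivAt_zero isOpen_Ioo isPreconnected_Ioo
    fun r hr => hasDerivAt_firstIntegral (hf'.hasDerivAt (isOpen_Ioo.mem_nhds hr))
      (hpos r hr).ne' (hode r hr)
  refine ⟨2 * √W, fun r hr => sq_eq_of_firstIntegral_eq (hpos r hr) ?_⟩
  rw [hW r hr, mul_pow, Real.sq_sqrt (hW r hr ▸ firstIntegral_nonneg _ _)]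
  ring

theorem exists_eqOn_add_mul_minimalProfile {C : ℝ} (hpos : ∀ r ∈ Ioo a b, 0 < r)
    (hf : ContDiffOn ℝ 1 f (Ioo a b)) (hC : ∀ r ∈ Ioo a b, C ^ 2 < 16 * r ^ 2)
    (hsq : ∀ r ∈ Ioo a b, deriv f r ^ 2 = C ^ 2 * minimalProfileDeriv C r ^ 2) :
    ∃ D C', D ^ 2 = C ^ 2 ∧ ∀ r ∈ Ioo a b, f r = C' + D * minimalProfile C r := by
  obtain ⟨D, hD, hfD⟩ := isPreconnected_Ioo.exists_eqOn_mul_of_sq_eq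
    (hf.continuousOn_deriv_of_isOpen isOpen_Ioo le_rfl)
    (fun r hr => (hasDerivAt_minimalProfileDeriv (hC r hr)).continuousAt.continuousWithinAt)
    (fun r hr => minimalProfileDeriv_ne_zero (hC r hr) (hpos r hr).ne') hsq
  obtain ⟨C', hC'⟩ := exists_eqOn_const_of_hasDerivAt_zero isOpen_Ioo isPreconnected_Ioo
    fun r hr => by
      simpa [hfD r hr] using ((hf.differentiableOn one_ne_zero).hasDerivAt
        (isOpen_Ioo.mem_nhds hr)).sub ((hasDerivAt_minimalProfile (hC r hr)).const_mul D)
  exact ⟨D, C', hD, fun r hr => eq_add_of_sub_eq (hC' r hr)⟩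

theorem ode_of_eqOn_add_mul_minimalProfile {C D C' : ℝ} (hD : D ^ 2 = C ^ 2)
    (hC : ∀ r ∈ Ioo a b, C ^ 2 < 16 * r ^ 2)
    (hf : ∀ r ∈ Ioo a b, f r = C' + D * minimalProfile C r) :
    ∀ r ∈ Ioo a b, 4 * r ^ 3 * deriv (deriv f) r + deriv f r ^ 3 = 0 := by
  have hf' : ∀ r ∈ Ioo a b, deriv f r = D * minimalProfileDeriv C r := fun r hr => by
    rw [Filter.EventuallyEq.deriv_eq (Filter.eventuallyEq_of_mem (isOpen_Ioo.mem_nhds hr) hf)]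
    exact (((hasDerivAt_minimalProfile (hC r hr)).const_mul D).const_add C').deriv
  intro r hr
  rw [Filter.EventuallyEq.deriv_eq (Filter.eventuallyEq_of_mem (isOpen_Ioo.mem_nhds hr) hf'),
    ((hasDerivAt_minimalProfileDeriv (hC r hr)).const_mul D).deriv, hf' r hr]
  exact mul_minimalProfile_ode hD (hC r hr)

end Interval

/-- Classification of horizontally minimal surfaces of revolution
`t = f(√(x²+y²))` in the Heisenberg group. -/
theorem horizontally_minimal_revolution
    (a b : ℝ) (ha : 0 ≤ a) (f : ℝ → ℝ)
    (hf : ContDiffOn ℝ 2 f (Set.Ioo a b)) :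
    (∀ r ∈ Set.Ioo a b, 4 * r ^ 3 * deriv (deriv f) r + (deriv f r) ^ 3 = 0) ↔
      ∃ C C' : ℝ, ∀ r ∈ Set.Ioo a b,
        C ^ 2 < 16 * r ^ 2 ∧
        (f r - C') ^ 2 = (C ^ 2 / 64) * (16 * r ^ 2 - C ^ 2) := by
  have hpos : ∀ r ∈ Ioo a b, 0 < r := fun r hr => ha.trans_lt hr.1
  constructor
  · intro hode
    obtain ⟨C, hsq⟩ := exists_sq_deriv_eq_of_ode hpos hf hode
    obtain ⟨D, C', hD, hfD⟩ := exists_eqOn_add_mul_minimalProfile hpos (hf.of_le one_le_two)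
      (fun r hr => (hsq r hr).1) (fun r hr => (hsq r hr).2)
    refine ⟨C, C', fun r hr => ⟨(hsq r hr).1, ?_⟩⟩
    rw [hfD r hr, add_sub_cancel_left, mul_pow, hD, minimalProfile_sq (hsq r hr).1.le]
    ring
  · rintro ⟨C, C', hC⟩
    obtain ⟨D, hD, hfD⟩ := isPreconnected_Ioo.exists_eqOn_mul_of_sq_eq (f := (f · - C')) (c := C)
      (hf.continuousOn.sub continuousOn_const) continuous_minimalProfile.continuousOn
      (fun r hr => (minimalProfile_pos (hC r hr).1).ne')
      (fun r hr => by rw [(hC r hr).2, minimalProfile_sq (hC r hr).1.le]; ring)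
    exact ode_of_eqOn_add_mul_minimalProfile hD (fun r hr => (hC r hr).1)
      fun r hr => eq_add_of_sub_eq' (hfD r hr)
end

section
/- Let q be a real constant and let f be a C² real function on an open interval I ⊆ (0,∞). Then f satisfies (r(8r + 2f'(r)f''(r)) − 4(4r² + f'(r)²))/(4r² + f'(r)²)^{3/2} = q for all r ∈ I (i.e., the surface of revolution t = f(√(x²+y²)) in the Heisenberg group has constant symplectic distortion q on I) if and only if there exists a constant c ∈ ℝ such that r²/√(4r² + f'(r)²) = c − q r²/4 for all r ∈ I. -/
/-! The quantity `F(r) + q r² / 4`, with `F(r) = r² / √(4r² + f'(r)²)`, has derivative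
`(r / 2) (q - Q(r))`. Since `r > 0` on the interval, `Q ≡ q` there exactly when this derivative
vanishes identically, i.e. (the interval being connected) exactly when `F(r) + q r² / 4` is
constant. -/

open Set

/-- The symplectic distortion `Q(r)` written in terms of `u = f'(r)` and `u' = f''(r)`. -/
noncomputable def symplecticDistortion (r u u' : ℝ) : ℝ :=
  (r * (8 * r + 2 * u * u') - 4 * (4 * r ^ 2 + u ^ 2)) / (4 * r ^ 2 + u ^ 2) ^ ((3 : ℝ) / 2)

theorem Real.rpow_three_div_two_eq_sqrt_pow {x : ℝ} (hx : 0 ≤ x) :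
    x ^ ((3 : ℝ) / 2) = √x ^ 3 := by
  rw [Real.rpow_div_two_eq_sqrt _ hx]
  norm_cast

theorem ContDiffOn.hasDerivAt_deriv_of_isOpen {𝕜 F : Type*} [NontriviallyNormedField 𝕜]
    [NormedAddCommGroup F] [NormedSpace 𝕜 F] {f : 𝕜 → F} {s : Set 𝕜} {n : WithTop ℕ∞}
    (hf : ContDiffOn 𝕜 n f s) (hn : 2 ≤ n) (hs : IsOpen s) {x : 𝕜} (hx : x ∈ s) :
    HasDerivAt (deriv f) (deriv (deriv f) x) x :=
  (((hf.deriv_of_isOpen hs (m := 1) hn).contDiffAt (hs.mem_nhds hx)).differentiableAt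
    one_ne_zero).hasDerivAt

theorem hasDerivAt_sq_div_sqrt {u : ℝ → ℝ} {u' r : ℝ} (hu : HasDerivAt u u' r)
    (hr : r ≠ 0) :
    HasDerivAt (fun x => x ^ 2 / √(4 * x ^ 2 + u x ^ 2))
      (-(r / 2) * symplecticDistortion r (u r) u') r := by
  have hD : 0 < 4 * r ^ 2 + u r ^ 2 := by positivity
  have hs : 0 < √(4 * r ^ 2 + u r ^ 2) := Real.sqrt_pos.2 hD
  have hsqrt : HasDerivAt (fun x => √(4 * x ^ 2 + u x ^ 2))
      ((8 * r + 2 * u r * u') / (2 * √(4 * r ^ 2 + u r ^ 2))) r :=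
    ((((hasDerivAt_pow 2 r).const_mul 4).add (hu.pow 2)).congr_deriv (by push_cast; ring)).sqrt
      hD.ne'
  refine ((hasDerivAt_pow 2 r).div hsqrt hs.ne').congr_deriv ?_
  rw [symplecticDistortion, Real.rpow_three_div_two_eq_sqrt_pow hD.le]
  field_simp
  linear_combination 4 * r * Real.sq_sqrt hD.le

theorem IsOpen.exists_forall_eq_iff_hasDerivAt_eq_zero {𝕜 G : Type*} [RCLike 𝕜]
    [NormedAddCommGroup G] [NormedSpace 𝕜 G] {s : Set 𝕜} (hs : IsOpen s)
    (hs' : IsPreconnected s) {g g' : 𝕜 → G} (hg : ∀ x ∈ s, HasDerivAt g (g' x) x) :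
    (∃ c, ∀ x ∈ s, g x = c) ↔ ∀ x ∈ s, g' x = 0 := by
  constructor
  · rintro ⟨c, hc⟩ x hx
    have hconst : HasDerivAt g 0 x :=
      (hasDerivAt_const x c).congr_of_eventuallyEq (Filter.eventually_of_mem (hs.mem_nhds hx) hc)
    exact (hg x hx).unique hconst
  · intro h
    refine hs.exists_is_const_of_deriv_eq_zero hs'
      (fun x hx => (hg x hx).differentiableAt.differentiableWithinAt) fun x hx => ?_
    rw [(hg x hx).deriv, h x hx]
    rfl

/-- First integral of the constant symplectic distortion equation for surfaces
of revolution `t = f(√(x²+y²))` in the Heisenberg group. -/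
theorem constant_symplectic_distortion_revolution
    (q : ℝ) (a b : ℝ) (ha : 0 ≤ a) (f : ℝ → ℝ)
    (hf : ContDiffOn ℝ 2 f (Set.Ioo a b)) :
    (∀ r ∈ Set.Ioo a b,
        (r * (8 * r + 2 * deriv f r * deriv (deriv f) r) -
            4 * (4 * r ^ 2 + (deriv f r) ^ 2)) /
          (4 * r ^ 2 + (deriv f r) ^ 2) ^ ((3 : ℝ) / 2) = q) ↔
      ∃ c : ℝ, ∀ r ∈ Set.Ioo a b,
        r ^ 2 / Real.sqrt (4 * r ^ 2 + (deriv f r) ^ 2) = c - q * r ^ 2 / 4 := by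
  have hr0 : ∀ r ∈ Ioo a b, r ≠ 0 := fun r hr => (ha.trans_lt hr.1).ne'
  set G : ℝ → ℝ := fun r => r ^ 2 / √(4 * r ^ 2 + deriv f r ^ 2) + q * r ^ 2 / 4
  have hG : ∀ r ∈ Ioo a b, HasDerivAt G
      (r / 2 * (q - symplecticDistortion r (deriv f r) (deriv (deriv f) r))) r := fun r hr =>
    ((hasDerivAt_sq_div_sqrt (hf.hasDerivAt_deriv_of_isOpen le_rfl isOpen_Ioo hr) (hr0 r hr)).add
      (((hasDerivAt_pow 2 r).const_mul q).div_const 4)).congr_deriv (by push_cast; ring)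
  calc (∀ r ∈ Ioo a b, symplecticDistortion r (deriv f r) (deriv (deriv f) r) = q)
      ↔ ∀ r ∈ Ioo a b,
          r / 2 * (q - symplecticDistortion r (deriv f r) (deriv (deriv f) r)) = 0 :=
        forall₂_congr fun r hr => by
          rw [mul_eq_zero, or_iff_right (div_ne_zero (hr0 r hr) two_ne_zero), sub_eq_zero,
            eq_comm]
    _ ↔ ∃ c, ∀ r ∈ Ioo a b, G r = c :=
        (isOpen_Ioo.exists_forall_eq_iff_hasDerivAt_eq_zero isPreconnected_Ioo hG).symm
    _ ↔ _ := exists_congr fun c => forall₂_congr fun r _ => eq_sub_iff_add_eq.symm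
end

section
/- Let R > 0 and let f(r) = √(R⁴ − r⁴) for 0 < r < R (the profile of the Korányi sphere of radius R, defined by (x²+y²)² + t² = R⁴). Then for all r ∈ (0,R): the horizontal mean curvature is H(r) = 3r/R², the horizontal Gauss curvature is K(r) = (6r⁴ − 2R⁴)/(r²R⁴), and the symplectic distortion is Q(r) = (3r⁴ − R⁴)/(r R² √(R⁴ − r⁴)). -/
/-!
Write `w = √(R⁴ − r⁴)`. Then `f' = −2r³/w` and `f'' = −2r²(3R⁴ − r⁴)/w³`, and `4r² + f'²` is a
perfect square, `4r²R⁴/w² = (2rR²/w)²`, so its `3/2`-power is `(2rR²/w)³`.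
After these substitutions each curvature is a rational function of `r`, `R`, `w`, and the identities follow from `w² = R⁴ − r⁴`.
-/

open Topology

lemma sq_rpow_three_halves {y : ℝ} (hy : 0 ≤ y) : (y ^ 2) ^ ((3 : ℝ) / 2) = y ^ 3 := by
  rw [← Real.rpow_natCast_mul hy]
  norm_num

section Profile

variable {c : ℝ}

lemma hasDerivAt_sqrt_sub_pow_four {s : ℝ} (hs : s ^ 4 < c) :
    HasDerivAt (fun x => √(c - x ^ 4)) (-2 * s ^ 3 / √(c - s ^ 4)) s := by
  have hsub : HasDerivAt (fun x : ℝ => c - x ^ 4) (-(4 * s ^ 3)) s := by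
    simpa using (hasDerivAt_pow 4 s).const_sub c
  convert hsub.sqrt (sub_pos.2 hs).ne' using 1
  field_simp
  ring

lemma deriv_sqrt_sub_pow_four_eventuallyEq {r : ℝ} (hr : r ^ 4 < c) :
    deriv (fun x => √(c - x ^ 4)) =ᶠ[𝓝 r] fun s => -2 * s ^ 3 / √(c - s ^ 4) := by
  have hopen : IsOpen {s : ℝ | s ^ 4 < c} := isOpen_lt (by fun_prop) continuous_const
  filter_upwards [hopen.mem_nhds hr] with s hs
  exact (hasDerivAt_sqrt_sub_pow_four hs).deriv

lemma deriv_deriv_sqrt_sub_pow_four {r : ℝ} (hr : r ^ 4 < c) :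
    deriv (deriv fun x => √(c - x ^ 4)) r = -2 * r ^ 2 * (3 * c - r ^ 4) / √(c - r ^ 4) ^ 3 := by
  have hw : 0 < c - r ^ 4 := sub_pos.2 hr
  have hsqrt : √(c - r ^ 4) ^ 2 = c - r ^ 4 := Real.sq_sqrt hw.le
  have hnum : HasDerivAt (fun s : ℝ => -2 * s ^ 3) (-6 * r ^ 2) r :=
    ((hasDerivAt_pow 3 r).const_mul (-2)).congr_deriv (by norm_num; ring)
  have hquot := hnum.fun_div (hasDerivAt_sqrt_sub_pow_four hr) (Real.sqrt_pos.2 hw).ne'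
  rw [(deriv_sqrt_sub_pow_four_eventuallyEq hr).deriv_eq, hquot.deriv]
  field_simp
  linear_combination (-6 * r ^ 2) * hsqrt

end Profile

theorem koranyi_sphere_curvatures_general (R : ℝ) (f : ℝ → ℝ)
    (hf : ∀ s, f s = Real.sqrt (R ^ 4 - s ^ 4)) :
    ∀ r ∈ Set.Ioo (0 : ℝ) R,
      -(4 * r ^ 3 * deriv (deriv f) r + (deriv f r) ^ 3) /
          (r * (4 * r ^ 2 + (deriv f r) ^ 2) ^ ((3 : ℝ) / 2)) = 3 * r / R ^ 2 ∧
      (4 * r * (8 * r + 2 * deriv f r * deriv (deriv f) r) -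
          16 * (4 * r ^ 2 + (deriv f r) ^ 2)) /
        (4 * r ^ 2 + (deriv f r) ^ 2) ^ 2 = (6 * r ^ 4 - 2 * R ^ 4) / (r ^ 2 * R ^ 4) ∧
      (r * (8 * r + 2 * deriv f r * deriv (deriv f) r) -
          4 * (4 * r ^ 2 + (deriv f r) ^ 2)) /
        (4 * r ^ 2 + (deriv f r) ^ 2) ^ ((3 : ℝ) / 2) =
        (3 * r ^ 4 - R ^ 4) / (r * R ^ 2 * Real.sqrt (R ^ 4 - r ^ 4)) := by
  rintro r ⟨hr0, hrR⟩
  obtain rfl : f = fun s => √(R ^ 4 - s ^ 4) := funext hf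
  have hr4 : r ^ 4 < R ^ 4 := pow_lt_pow_left₀ hrR hr0.le (by norm_num)
  have hR : R ≠ 0 := (hr0.trans hrR).ne'
  set w := √(R ^ 4 - r ^ 4)
  have hw : 0 < w := Real.sqrt_pos.2 (sub_pos.2 hr4)
  have hw2 : w ^ 2 = R ^ 4 - r ^ 4 := Real.sq_sqrt (sub_pos.2 hr4).le
  have hd1 : deriv (fun s => √(R ^ 4 - s ^ 4)) r = -2 * r ^ 3 / w :=
    (hasDerivAt_sqrt_sub_pow_four hr4).deriv
  have hd2 : deriv (deriv fun s => √(R ^ 4 - s ^ 4)) r = -2 * r ^ 2 * (3 * R ^ 4 - r ^ 4) / w ^ 3 :=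
    deriv_deriv_sqrt_sub_pow_four hr4
  have hnorm : 4 * r ^ 2 + (-2 * r ^ 3 / w) ^ 2 = (2 * r * R ^ 2 / w) ^ 2 := by
    field_simp
    linear_combination 4 * hw2
  rw [hd1, hd2, hnorm, sq_rpow_three_halves (by positivity)]
  refine ⟨?_, ?_, ?_⟩
  · field_simp
    ring
  · field_simp
    linear_combination 32 * (w ^ 2 - r ^ 4 - R ^ 4) * hw2
  · field_simp
    linear_combination 8 * (w ^ 2 - r ^ 4 - R ^ 4) * hw2

/-- Horizontal mean curvature, horizontal Gauss curvature and symplectic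
distortion of the Korányi sphere of radius `R` in the Heisenberg group,
whose profile is `f(r) = √(R⁴ − r⁴)`. -/
theorem koranyi_sphere_curvatures (R : ℝ) (hR : 0 < R) (f : ℝ → ℝ)
    (hf : ∀ s, f s = Real.sqrt (R ^ 4 - s ^ 4)) :
    ∀ r ∈ Set.Ioo (0 : ℝ) R,
      -(4 * r ^ 3 * deriv (deriv f) r + (deriv f r) ^ 3) /
          (r * (4 * r ^ 2 + (deriv f r) ^ 2) ^ ((3 : ℝ) / 2)) = 3 * r / R ^ 2 ∧
      (4 * r * (8 * r + 2 * deriv f r * deriv (deriv f) r) -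
          16 * (4 * r ^ 2 + (deriv f r) ^ 2)) /
        (4 * r ^ 2 + (deriv f r) ^ 2) ^ 2 = (6 * r ^ 4 - 2 * R ^ 4) / (r ^ 2 * R ^ 4) ∧
      (r * (8 * r + 2 * deriv f r * deriv (deriv f) r) -
          4 * (4 * r ^ 2 + (deriv f r) ^ 2)) /
        (4 * r ^ 2 + (deriv f r) ^ 2) ^ ((3 : ℝ) / 2) =
        (3 * r ^ 4 - R ^ 4) / (r * R ^ 2 * Real.sqrt (R ^ 4 - r ^ 4)) :=
  koranyi_sphere_curvatures_general R f hf
end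

section
/- Let R > 0 and let f(r) = r√(4R² − r²) − 4R²·arcsin(r/(2R)) + 2πR² for 0 < r < 2R (the profile of the bubble set of radius R in the Heisenberg group). Then for all r ∈ (0, 2R): the horizontal mean curvature is H(r) = 1/R, the horizontal Gauss curvature is K(r) = 1/R² − 2/r², and the symplectic distortion is Q(r) = (Rr/√(4R² − r²))·(1/R² − 2/r²). -/
/-!
The profile has slope `f' = -2r²/u` with `u = √(4R² - r²)`, so the horizontal normal has length
`√(4r² + f'²) = 4rR/u` and `f'' = -2r(8R² - r²)/u³`. All three curvatures then become rational
functions of `r`, `R`, `u`, and the claimed values follow from the relation `u² = 4R² - r²`.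
-/

open Real Set Filter Topology

noncomputable def bubbleProfile (R s : ℝ) : ℝ :=
  s * √(4 * R ^ 2 - s ^ 2) - 4 * R ^ 2 * arcsin (s / (2 * R)) + 2 * π * R ^ 2

noncomputable def bubbleSlope (R s : ℝ) : ℝ :=
  -2 * s ^ 2 / √(4 * R ^ 2 - s ^ 2)

theorem sq_rpow_three_div_two {a : ℝ} (ha : 0 ≤ a) : (a ^ 2) ^ ((3 : ℝ) / 2) = a ^ 3 := by
  rw [← rpow_natCast a 2, ← rpow_mul ha]
  norm_num

theorem hasDerivAt_sqrt_sub_sq {a x : ℝ} (hx : x ^ 2 < a) :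
    HasDerivAt (fun s => √(a - s ^ 2)) (-x / √(a - x ^ 2)) x := by
  have hpos : 0 < a - x ^ 2 := sub_pos.2 hx
  refine (((hasDerivAt_pow 2 x).const_sub a).sqrt hpos.ne').congr_deriv ?_
  field_simp
  ring

theorem hasDerivAt_bubbleProfile {R x : ℝ} (hR : 0 < R) (hx : x ^ 2 < 4 * R ^ 2) :
    HasDerivAt (bubbleProfile R) (bubbleSlope R x) x := by
  have hu : 0 < √(4 * R ^ 2 - x ^ 2) := sqrt_pos.2 (sub_pos.2 hx)
  have hu2 : √(4 * R ^ 2 - x ^ 2) ^ 2 = 4 * R ^ 2 - x ^ 2 := sq_sqrt (sub_pos.2 hx).le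
  have habs : |x / (2 * R)| < 1 := by
    rw [← sq_lt_one_iff_abs_lt_one, div_pow, div_lt_one (by positivity)]
    linarith
  have hroot : √(1 - (x / (2 * R)) ^ 2) = √(4 * R ^ 2 - x ^ 2) / (2 * R) := by
    rw [show 1 - (x / (2 * R)) ^ 2 = (4 * R ^ 2 - x ^ 2) / (2 * R) ^ 2 by field_simp; ring,
      sqrt_div (sub_pos.2 hx).le, sqrt_sq (by positivity)]
  have harcsin := (hasDerivAt_arcsin (abs_lt.1 habs).1.ne' (abs_lt.1 habs).2.ne).comp x
    ((hasDerivAt_id x).div_const (2 * R))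
  refine ((((hasDerivAt_id x).mul (hasDerivAt_sqrt_sub_sq hx)).sub
    (harcsin.const_mul (4 * R ^ 2))).add_const (2 * π * R ^ 2)).congr_deriv ?_
  rw [hroot, bubbleSlope, id]
  field_simp
  linear_combination hu2

theorem hasDerivAt_bubbleSlope {R x : ℝ} (hx : x ^ 2 < 4 * R ^ 2) :
    HasDerivAt (bubbleSlope R)
      (-2 * x * (8 * R ^ 2 - x ^ 2) / √(4 * R ^ 2 - x ^ 2) ^ 3) x := by
  have hu : 0 < √(4 * R ^ 2 - x ^ 2) := sqrt_pos.2 (sub_pos.2 hx)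
  have hu2 : √(4 * R ^ 2 - x ^ 2) ^ 2 = 4 * R ^ 2 - x ^ 2 := sq_sqrt (sub_pos.2 hx).le
  refine (((hasDerivAt_pow 2 x).const_mul (-2)).div (hasDerivAt_sqrt_sub_sq hx)
    hu.ne').congr_deriv ?_
  field_simp
  linear_combination -2 * x * hu2

theorem deriv_deriv_bubbleProfile {R x : ℝ} (hR : 0 < R) (hx : x ^ 2 < 4 * R ^ 2) :
    deriv (deriv (bubbleProfile R)) x =
      -2 * x * (8 * R ^ 2 - x ^ 2) / √(4 * R ^ 2 - x ^ 2) ^ 3 := by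
  have hslope : deriv (bubbleProfile R) =ᶠ[𝓝 x] bubbleSlope R := by
    filter_upwards [(isOpen_lt (continuous_pow 2) continuous_const).mem_nhds hx] with s hs
    exact (hasDerivAt_bubbleProfile hR hs).deriv
  rw [hslope.deriv_eq]
  exact (hasDerivAt_bubbleSlope hx).deriv

theorem bubble_set_curvatures_general (R : ℝ) (f : ℝ → ℝ)
    (hf : ∀ s, f s = s * Real.sqrt (4 * R ^ 2 - s ^ 2) -
      4 * R ^ 2 * Real.arcsin (s / (2 * R)) + 2 * Real.pi * R ^ 2) :
    ∀ r ∈ Set.Ioo (0 : ℝ) (2 * R),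
      -(4 * r ^ 3 * deriv (deriv f) r + (deriv f r) ^ 3) /
          (r * (4 * r ^ 2 + (deriv f r) ^ 2) ^ ((3 : ℝ) / 2)) = 1 / R ∧
      (4 * r * (8 * r + 2 * deriv f r * deriv (deriv f) r) -
          16 * (4 * r ^ 2 + (deriv f r) ^ 2)) /
        (4 * r ^ 2 + (deriv f r) ^ 2) ^ 2 = 1 / R ^ 2 - 2 / r ^ 2 ∧
      (r * (8 * r + 2 * deriv f r * deriv (deriv f) r) -
          4 * (4 * r ^ 2 + (deriv f r) ^ 2)) /
        (4 * r ^ 2 + (deriv f r) ^ 2) ^ ((3 : ℝ) / 2) =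
        (R * r / Real.sqrt (4 * R ^ 2 - r ^ 2)) * (1 / R ^ 2 - 2 / r ^ 2) := by
  rintro r ⟨hr0, hr2R⟩
  have hR : 0 < R := by linarith
  have hr : r ^ 2 < 4 * R ^ 2 := by nlinarith
  obtain rfl : f = bubbleProfile R := funext hf
  have hf' : deriv (bubbleProfile R) r = bubbleSlope R r := (hasDerivAt_bubbleProfile hR hr).deriv
  rw [deriv_deriv_bubbleProfile hR hr, hf', bubbleSlope]
  set u := √(4 * R ^ 2 - r ^ 2)
  have hu : 0 < u := sqrt_pos.2 (sub_pos.2 hr)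
  have hu2 : u ^ 2 = 4 * R ^ 2 - r ^ 2 := sq_sqrt (sub_pos.2 hr).le
  have hnormal : 4 * r ^ 2 + (-2 * r ^ 2 / u) ^ 2 = (4 * r * R / u) ^ 2 := by
    field_simp
    linear_combination 4 * hu2
  rw [hnormal, sq_rpow_three_div_two (by positivity)]
  refine ⟨?_, ?_, ?_⟩
  · field_simp
    ring
  all_goals
    field_simp
    linear_combination 8 * (u ^ 2 - 4 * R ^ 2 - r ^ 2) * hu2

/-- Horizontal mean curvature, horizontal Gauss curvature and symplectic
distortion of the bubble set of radius `R` in the Heisenberg group, whose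
profile is `f(r) = r√(4R² − r²) − 4R²·arcsin(r/(2R)) + 2πR²`. -/
theorem bubble_set_curvatures (R : ℝ) (hR : 0 < R) (f : ℝ → ℝ)
    (hf : ∀ s, f s = s * Real.sqrt (4 * R ^ 2 - s ^ 2) -
      4 * R ^ 2 * Real.arcsin (s / (2 * R)) + 2 * Real.pi * R ^ 2) :
    ∀ r ∈ Set.Ioo (0 : ℝ) (2 * R),
      -(4 * r ^ 3 * deriv (deriv f) r + (deriv f r) ^ 3) /
          (r * (4 * r ^ 2 + (deriv f r) ^ 2) ^ ((3 : ℝ) / 2)) = 1 / R ∧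
      (4 * r * (8 * r + 2 * deriv f r * deriv (deriv f) r) -
          16 * (4 * r ^ 2 + (deriv f r) ^ 2)) /
        (4 * r ^ 2 + (deriv f r) ^ 2) ^ 2 = 1 / R ^ 2 - 2 / r ^ 2 ∧
      (r * (8 * r + 2 * deriv f r * deriv (deriv f) r) -
          4 * (4 * r ^ 2 + (deriv f r) ^ 2)) /
        (4 * r ^ 2 + (deriv f r) ^ 2) ^ ((3 : ℝ) / 2) =
        (R * r / Real.sqrt (4 * R ^ 2 - r ^ 2)) * (1 / R ^ 2 - 2 / r ^ 2) :=
  bubble_set_curvatures_general R f hf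
end

section
/- Let f be a C² real function on an open interval I ⊆ (0,∞). Then the surface of revolution a = f(ρ) in the affine-additive group has horizontal mean curvature identically zero on I if and only if it has horizontal Gauss curvature identically equal to −4 on I. Explicitly, with the notations below: (∀ρ ∈ I, ρ f''(ρ) + 4(ρ²+1)f'(ρ)³ − 6 f'(ρ)² + 2 f'(ρ) = 0) if and only if (∀ρ ∈ I, 4(2ρ f''(ρ)(2(ρ²+1)f'(ρ) − 1) − 4 f'(ρ)² + 4 f'(ρ) − 1) = −4·(4(ρ²+1)f'(ρ)² − 4 f'(ρ) + 1)²). -/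
/-- For surfaces of revolution `a = f(ρ)` in the affine-additive group,
the horizontal mean curvature vanishes identically iff the horizontal Gauss
curvature is identically `−4`. -/
theorem aa_minimal_iff_gauss_neg_four
    (a b : ℝ) (ha : 0 ≤ a) (f : ℝ → ℝ)
    (hf : ContDiffOn ℝ 2 f (Set.Ioo a b)) :
    (∀ ρ ∈ Set.Ioo a b,
        ρ * deriv (deriv f) ρ + 4 * (ρ ^ 2 + 1) * (deriv f ρ) ^ 3 -
          6 * (deriv f ρ) ^ 2 + 2 * deriv f ρ = 0) ↔
      (∀ ρ ∈ Set.Ioo a b,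
        4 * (2 * ρ * deriv (deriv f) ρ * (2 * (ρ ^ 2 + 1) * deriv f ρ - 1) -
            4 * (deriv f ρ) ^ 2 + 4 * deriv f ρ - 1) =
          -4 * (4 * (ρ ^ 2 + 1) * (deriv f ρ) ^ 2 - 4 * deriv f ρ + 1) ^ 2) := by
  set H : ℝ → ℝ := fun ρ => ρ * deriv (deriv f) ρ + 4 * (ρ ^ 2 + 1) * (deriv f ρ) ^ 3 -
          6 * (deriv f ρ) ^ 2 + 2 * deriv f ρ with hH
  constructor
  · intro h ρ hρ
    have hm := h ρ hρ
    linear_combination (8 * (2 * (ρ ^ 2 + 1) * deriv f ρ - 1)) * hm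
  · intro h ρ₀ hρ₀
    have hopen : IsOpen (Set.Ioo a b) := isOpen_Ioo
    have hmem : Set.Ioo a b ∈ nhds ρ₀ := hopen.mem_nhds hρ₀
    -- continuity of deriv f and deriv (deriv f) on the interval
    have hd1 : ContDiffOn ℝ 1 (deriv f) (Set.Ioo a b) := by
      have := hf.deriv_of_isOpen hopen (m := 1) (by norm_num)
      exact this
    have hc1 : ContinuousOn (deriv f) (Set.Ioo a b) := hd1.continuousOn
    have hc2 : ContinuousOn (deriv (deriv f)) (Set.Ioo a b) :=
      hd1.continuousOn_deriv_of_isOpen hopen le_rfl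
    have hcH : ContinuousAt H ρ₀ := by
      have h1 : ContinuousAt (deriv f) ρ₀ := hc1.continuousAt hmem
      have h2 : ContinuousAt (deriv (deriv f)) ρ₀ := hc2.continuousAt hmem
      fun_prop
    -- pointwise: at points where 2(ρ²+1)f' ≠ 1 the Gauss equation forces H = 0
    have key : ∀ ρ ∈ Set.Ioo a b, 2 * (ρ ^ 2 + 1) * deriv f ρ - 1 ≠ 0 → H ρ = 0 := by
      intro ρ hρ hne
      have hg := h ρ hρ
      have : 8 * (2 * (ρ ^ 2 + 1) * deriv f ρ - 1) * H ρ = 0 := by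
        simp only [hH]
        linear_combination hg
      rcases mul_eq_zero.1 this with h' | h'
      · rcases mul_eq_zero.1 h' with h'' | h''
        · norm_num at h''
        · exact absurd h'' hne
      · exact h'
    by_cases hcase : ∀ᶠ ρ in nhds ρ₀, 2 * (ρ ^ 2 + 1) * deriv f ρ - 1 = 0
    · -- f' = 1/(2(ρ²+1)) near ρ₀; compute f'' and conclude
      have hpos : (0:ℝ) < ρ₀ ^ 2 + 1 := by positivity
      have heq : deriv f =ᶠ[nhds ρ₀] (fun ρ => (2 * (ρ ^ 2 + 1))⁻¹) := by
        filter_upwards [hcase] with ρ hρ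
        have h2 : (2 * (ρ ^ 2 + 1)) ≠ 0 := by positivity
        field_simp at hρ ⊢
        linarith
      have hx : deriv f ρ₀ = (2 * (ρ₀ ^ 2 + 1))⁻¹ := heq.self_of_nhds
      have hder : HasDerivAt (fun ρ : ℝ => (2 * (ρ ^ 2 + 1))⁻¹)
          (-(2 * (2 * ρ₀)) / (2 * (ρ₀ ^ 2 + 1)) ^ 2) ρ₀ := by
        have h1 : HasDerivAt (fun ρ : ℝ => 2 * (ρ ^ 2 + 1)) (2 * (2 * ρ₀)) ρ₀ := by
          have : HasDerivAt (fun ρ : ℝ => ρ ^ 2 + 1) (2 * ρ₀) ρ₀ := by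
            simpa using ((hasDerivAt_pow 2 ρ₀).add_const 1)
          simpa using this.const_mul 2
        exact h1.inv (by positivity)
      have hy : deriv (deriv f) ρ₀ = -(2 * (2 * ρ₀)) / (2 * (ρ₀ ^ 2 + 1)) ^ 2 := by
        rw [heq.deriv_eq, hder.deriv]
      show H ρ₀ = 0
      simp only [hH]
      rw [hx, hy]
      have h2 : (2 * (ρ₀ ^ 2 + 1)) ≠ 0 := by positivity
      field_simp
      ring
    · -- frequently 2(ρ²+1)f' ≠ 1 near ρ₀: H vanishes frequently, and H is continuous
      rw [Filter.not_eventually] at hcase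
      have hfreq : ∃ᶠ ρ in nhds ρ₀, H ρ = 0 := by
        have hmem' : ∀ᶠ ρ in nhds ρ₀, ρ ∈ Set.Ioo a b := hmem
        refine (hcase.and_eventually hmem').mono ?_
        rintro ρ ⟨hne, hρ⟩
        exact key ρ hρ hne
      have : ∃ᶠ y in nhds (H ρ₀), y = 0 := hcH.tendsto.frequently hfreq
      by_contra hne0
      exact (this.and_eventually (eventually_ne_nhds hne0)).exists.elim
        fun y ⟨h1, h2⟩ => h2 h1
end

section
/- Let k be a real constant and let f be a C² real function on an open interval I ⊆ (0,∞). If the surface of revolution a = f(ρ) in the affine-additive group has constant horizontal Gauss curvature k on I, i.e., 4(2ρ f''(ρ)(2(ρ²+1)f'(ρ) − 1) − 4 f'(ρ)² + 4 f'(ρ) − 1) = k·(4(ρ²+1)f'(ρ)² − 4 f'(ρ) + 1)² for all ρ ∈ I, then there exists a constant c ∈ ℝ such that for all ρ ∈ I: (c − (k/4)ρ²)·((2(ρ²+1)f'(ρ) − 1)² + ρ²) = ρ²(ρ² + 1). -/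
/-!
Write `u = f'` and `D(ρ, u) = 4(ρ²+1)u² − 4u + 1 = (2ρu)² + (2u − 1)²`, which is positive for
`ρ ≠ 0`, and `N = 4(2ρu'(2(ρ²+1)u − 1) − (2u − 1)²)` for the numerator of the curvature, so that the
equation reads `N = k D²`. The function `ρ ↦ ρ² / D(ρ, u(ρ)) + (k/4)ρ²` has derivative
`−(ρ/2)(N − k D²) / D²`, hence is a constant `c` on the interval, and
`(2(ρ²+1)u − 1)² + ρ² = (ρ²+1) D` turns `c − (k/4)ρ² = ρ² / D` into the claimed identity.
-/

open Set

def curvatureDenom (ρ u : ℝ) : ℝ := 4 * (ρ ^ 2 + 1) * u ^ 2 - 4 * u + 1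

lemma curvatureDenom_eq_sq_add_sq (ρ u : ℝ) :
    curvatureDenom ρ u = (2 * ρ * u) ^ 2 + (2 * u - 1) ^ 2 := by
  unfold curvatureDenom; ring

lemma curvatureDenom_pos {ρ : ℝ} (hρ : ρ ≠ 0) (u : ℝ) : 0 < curvatureDenom ρ u := by
  rw [curvatureDenom_eq_sq_add_sq]
  by_cases hu : u = 0
  · simp [hu]
  · have : 0 < (2 * ρ * u) ^ 2 := by positivity
    positivity

lemma sq_add_sq_eq_mul_curvatureDenom (ρ u : ℝ) :
    (2 * (ρ ^ 2 + 1) * u - 1) ^ 2 + ρ ^ 2 = (ρ ^ 2 + 1) * curvatureDenom ρ u := by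
  unfold curvatureDenom; ring

lemma hasDerivAt_curvatureDenom {u : ℝ → ℝ} {u' ρ : ℝ} (hu : HasDerivAt u u' ρ) :
    HasDerivAt (fun ρ => curvatureDenom ρ (u ρ))
      (8 * ρ * u ρ ^ 2 + 4 * (ρ ^ 2 + 1) * (2 * u ρ * u') - 4 * u') ρ := by
  have hρ2 : HasDerivAt (fun ρ : ℝ => 4 * (ρ ^ 2 + 1)) (8 * ρ) ρ :=
    (((hasDerivAt_pow 2 ρ).add_const 1).const_mul 4).congr_deriv (by ring)
  have hu2 : HasDerivAt (fun ρ => u ρ ^ 2) (2 * u ρ * u') ρ := by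
    simpa using hu.fun_pow 2
  exact ((hρ2.mul hu2).sub (hu.const_mul 4)).add_const 1

noncomputable def curvatureFirstIntegral (k : ℝ) (u : ℝ → ℝ) (ρ : ℝ) : ℝ :=
  ρ ^ 2 / curvatureDenom ρ (u ρ) + k / 4 * ρ ^ 2

lemma hasDerivAt_curvatureFirstIntegral_zero {k : ℝ} {u : ℝ → ℝ} {u' ρ : ℝ} (hρ : ρ ≠ 0)
    (hu : HasDerivAt u u' ρ)
    (hK : 4 * (2 * ρ * u' * (2 * (ρ ^ 2 + 1) * u ρ - 1) - 4 * u ρ ^ 2 + 4 * u ρ - 1) =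
      k * curvatureDenom ρ (u ρ) ^ 2) :
    HasDerivAt (curvatureFirstIntegral k u) 0 ρ := by
  have hD := (curvatureDenom_pos hρ (u ρ)).ne'
  have hsq : HasDerivAt (fun ρ : ℝ => ρ ^ 2) (2 * ρ) ρ := by simpa using hasDerivAt_pow 2 ρ
  refine ((hsq.div (hasDerivAt_curvatureDenom hu) hD).add (hsq.const_mul (k / 4))).congr_deriv ?_
  rw [div_add' _ _ _ (pow_ne_zero 2 hD), div_eq_zero_iff]
  left
  unfold curvatureDenom at hK ⊢
  linear_combination (-ρ / 2) * hK

theorem exists_curvatureFirstIntegral_eq {k : ℝ} {u u' : ℝ → ℝ} {s : Set ℝ} (hs : IsOpen s)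
    (hs' : IsPreconnected s) (h0 : ∀ ρ ∈ s, ρ ≠ 0) (hu : ∀ ρ ∈ s, HasDerivAt u (u' ρ) ρ)
    (hK : ∀ ρ ∈ s,
      4 * (2 * ρ * u' ρ * (2 * (ρ ^ 2 + 1) * u ρ - 1) - 4 * u ρ ^ 2 + 4 * u ρ - 1) =
        k * curvatureDenom ρ (u ρ) ^ 2) :
    ∃ c, ∀ ρ ∈ s, (c - k / 4 * ρ ^ 2) * ((2 * (ρ ^ 2 + 1) * u ρ - 1) ^ 2 + ρ ^ 2) =
      ρ ^ 2 * (ρ ^ 2 + 1) := by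
  have hI : ∀ ρ ∈ s, HasDerivAt (curvatureFirstIntegral k u) 0 ρ := fun ρ hρ =>
    hasDerivAt_curvatureFirstIntegral_zero (h0 ρ hρ) (hu ρ hρ) (hK ρ hρ)
  obtain ⟨c, hc⟩ := hs.exists_is_const_of_deriv_eq_zero hs'
    (fun ρ hρ => (hI ρ hρ).differentiableAt.differentiableWithinAt) (fun ρ hρ => (hI ρ hρ).deriv)
  refine ⟨c, fun ρ hρ => ?_⟩
  have hD := (curvatureDenom_pos (h0 ρ hρ) (u ρ)).ne'
  rw [← hc ρ hρ, sq_add_sq_eq_mul_curvatureDenom, curvatureFirstIntegral]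
  field_simp
  ring

/-- First integral of the constant horizontal Gauss curvature equation for
surfaces of revolution `a = f(ρ)` in the affine-additive group. -/
theorem aa_constant_horizontal_gauss_curvature
    (k : ℝ) (a b : ℝ) (ha : 0 ≤ a) (f : ℝ → ℝ)
    (hf : ContDiffOn ℝ 2 f (Set.Ioo a b))
    (hK : ∀ ρ ∈ Set.Ioo a b,
      4 * (2 * ρ * deriv (deriv f) ρ * (2 * (ρ ^ 2 + 1) * deriv f ρ - 1) -
          4 * (deriv f ρ) ^ 2 + 4 * deriv f ρ - 1) =
        k * (4 * (ρ ^ 2 + 1) * (deriv f ρ) ^ 2 - 4 * deriv f ρ + 1) ^ 2) :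
    ∃ c : ℝ, ∀ ρ ∈ Set.Ioo a b,
      (c - (k / 4) * ρ ^ 2) *
          ((2 * (ρ ^ 2 + 1) * deriv f ρ - 1) ^ 2 + ρ ^ 2) =
        ρ ^ 2 * (ρ ^ 2 + 1) := by
  have hf' : DifferentiableOn ℝ (deriv f) (Ioo a b) :=
    (hf.deriv_of_isOpen isOpen_Ioo (m := 1) (by norm_num)).differentiableOn one_ne_zero
  exact exists_curvatureFirstIntegral_eq isOpen_Ioo isPreconnected_Ioo
    (fun ρ hρ => (ha.trans_lt hρ.1).ne')
    (fun ρ hρ => (hf'.differentiableAt (isOpen_Ioo.mem_nhds hρ)).hasDerivAt) hK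
end

section
/- Let h be a real constant and let f be a C² real function on an open interval I ⊆ (0,∞). If the surface of revolution a = f(ρ) in the affine-additive group has constant horizontal mean curvature h on I, i.e., −4ρ(ρ f''(ρ) + 4(ρ²+1)f'(ρ)³ − 6 f'(ρ)² + 2 f'(ρ)) = h·(4(ρ²+1)f'(ρ)² − 4 f'(ρ) + 1)^{3/2} for all ρ ∈ I, then there exists a constant c₁ ∈ ℝ such that for all ρ ∈ I: 2(ρ²+1)f'(ρ) − 1 = (c₁ − hρ/2)·√(4(ρ²+1)f'(ρ)² − 4 f'(ρ) + 1). -/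
/-!
The substitution `v = (2(ρ²+1)f' - 1)/√D` (`slopeRatio ρ (f' ρ)`), where
`D = 4(ρ²+1)f'² - 4f' + 1 = (2ρf')² + (2f'-1)²`, satisfies
`v' = 2ρ(ρf'' + 4(ρ²+1)f'³ - 6f'² + 2f')/D^{3/2} = -H/2`. Since `D > 0` for `ρ ≠ 0`, constant
curvature `h` gives `v + hρ/2` vanishing derivative on the interval, so it is a constant `c₁`,
and `2(ρ²+1)f' - 1 = v √D` is the claimed identity.
-/

open Set

theorem IsOpen.exists_eq_const_add_mul_of_hasDerivAt {s : Set ℝ} (hs : IsOpen s)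
    (hs' : IsPreconnected s) {F : ℝ → ℝ} {c : ℝ} (hF : ∀ x ∈ s, HasDerivAt F c x) :
    ∃ c₁, ∀ x ∈ s, F x = c₁ + c * x := by
  have hG : ∀ x ∈ s, HasDerivAt (fun y ↦ F y - c * y) 0 x := fun x hx ↦
    ((hF x hx).sub ((hasDerivAt_id x).const_mul c)).congr_deriv (by simp)
  obtain ⟨c₁, hc₁⟩ := hs.exists_is_const_of_deriv_eq_zero hs'
    (fun x hx ↦ (hG x hx).differentiableAt.differentiableWithinAt)
    (fun x hx ↦ (hG x hx).deriv)
  exact ⟨c₁, fun x hx ↦ by linarith [hc₁ x hx]⟩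

theorem ContDiffOn.hasDerivAt_deriv {f : ℝ → ℝ} {s : Set ℝ} (hf : ContDiffOn ℝ 2 f s)
    (hs : IsOpen s) {x : ℝ} (hx : x ∈ s) : HasDerivAt (deriv f) (deriv (deriv f) x) x :=
  (((hf.deriv_of_isOpen hs (by norm_num : (1 : WithTop ℕ∞) + 1 ≤ 2)).differentiableOn
    one_ne_zero x hx).differentiableAt (hs.mem_nhds hx)).hasDerivAt

namespace AffineAdditive

def disc (ρ x : ℝ) : ℝ := 4 * (ρ ^ 2 + 1) * x ^ 2 - 4 * x + 1

def curvatureNumerator (ρ x x' : ℝ) : ℝ :=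
  ρ * x' + 4 * (ρ ^ 2 + 1) * x ^ 3 - 6 * x ^ 2 + 2 * x

noncomputable def slopeRatio (ρ x : ℝ) : ℝ := (2 * (ρ ^ 2 + 1) * x - 1) / √(disc ρ x)

theorem disc_eq_sq_add_sq (ρ x : ℝ) : disc ρ x = (2 * ρ * x) ^ 2 + (2 * x - 1) ^ 2 := by
  unfold disc; ring

theorem disc_pos {ρ : ℝ} (hρ : ρ ≠ 0) (x : ℝ) : 0 < disc ρ x := by
  rw [disc_eq_sq_add_sq]
  rcases eq_or_ne x 0 with rfl | hx
  · norm_num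
  · have : 0 < (2 * ρ * x) ^ 2 := by positivity
    positivity

theorem slopeRatio_mul_sqrt_disc {ρ : ℝ} (hρ : ρ ≠ 0) (x : ℝ) :
    slopeRatio ρ x * √(disc ρ x) = 2 * (ρ ^ 2 + 1) * x - 1 :=
  div_mul_cancel₀ _ (Real.sqrt_pos.2 (disc_pos hρ x)).ne'

section Derivatives

variable {g : ℝ → ℝ} {g' ρ : ℝ}

theorem hasDerivAt_disc_comp (hg : HasDerivAt g g' ρ) :
    HasDerivAt (fun r ↦ disc r (g r))
      (8 * ρ * g ρ ^ 2 + 8 * (ρ ^ 2 + 1) * g ρ * g' - 4 * g') ρ := by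
  have := ((((hasDerivAt_pow 2 ρ).add_const 1).const_mul 4).mul (hg.pow 2)).sub
    (hg.const_mul 4) |>.add_const 1
  exact this.congr_deriv (by push_cast [Pi.pow_apply]; ring)

theorem hasDerivAt_slopeRatio_comp (hρ : ρ ≠ 0) (hg : HasDerivAt g g' ρ) :
    HasDerivAt (fun r ↦ slopeRatio r (g r))
      (2 * ρ * curvatureNumerator ρ (g ρ) g' / √(disc ρ (g ρ)) ^ 3) ρ := by
  have hD := disc_pos hρ (g ρ)
  have hs : √(disc ρ (g ρ)) ≠ 0 := (Real.sqrt_pos.2 hD).ne'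
  have hnum : HasDerivAt (fun r ↦ 2 * (r ^ 2 + 1) * g r - 1)
      (4 * ρ * g ρ + 2 * (ρ ^ 2 + 1) * g') ρ :=
    ((((hasDerivAt_pow 2 ρ).add_const 1).const_mul 2).mul hg).sub_const 1
      |>.congr_deriv (by push_cast; ring)
  refine (hnum.div ((hasDerivAt_disc_comp hg).sqrt hD.ne') hs).congr_deriv ?_
  have hsq : √(disc ρ (g ρ)) ^ 2 = disc ρ (g ρ) := Real.sq_sqrt hD.le
  field_simp
  rw [hsq]
  unfold disc curvatureNumerator
  ring

theorem hasDerivAt_slopeRatio_comp_of_curvature {h : ℝ} (hρ : ρ ≠ 0)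
    (hg : HasDerivAt g g' ρ)
    (hH : -4 * ρ * curvatureNumerator ρ (g ρ) g' = h * disc ρ (g ρ) ^ ((3 : ℝ) / 2)) :
    HasDerivAt (fun r ↦ slopeRatio r (g r)) (-h / 2) ρ := by
  refine (hasDerivAt_slopeRatio_comp hρ hg).congr_deriv ?_
  rw [Real.rpow_div_two_eq_sqrt _ (disc_pos hρ _).le, Real.rpow_ofNat] at hH
  have hs : √(disc ρ (g ρ)) ≠ 0 := (Real.sqrt_pos.2 (disc_pos hρ _)).ne'
  field_simp
  linear_combination -hH

end Derivatives

end AffineAdditive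

open AffineAdditive

/-- First integral of the constant horizontal mean curvature equation for
surfaces of revolution `a = f(ρ)` in the affine-additive group. -/
theorem aa_constant_horizontal_mean_curvature
    (h : ℝ) (a b : ℝ) (ha : 0 ≤ a) (f : ℝ → ℝ)
    (hf : ContDiffOn ℝ 2 f (Set.Ioo a b))
    (hH : ∀ ρ ∈ Set.Ioo a b,
      -4 * ρ * (ρ * deriv (deriv f) ρ + 4 * (ρ ^ 2 + 1) * (deriv f ρ) ^ 3 -
          6 * (deriv f ρ) ^ 2 + 2 * deriv f ρ) =
        h * (4 * (ρ ^ 2 + 1) * (deriv f ρ) ^ 2 - 4 * deriv f ρ + 1) ^ ((3 : ℝ) / 2)) :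
    ∃ c₁ : ℝ, ∀ ρ ∈ Set.Ioo a b,
      2 * (ρ ^ 2 + 1) * deriv f ρ - 1 =
        (c₁ - h * ρ / 2) *
          Real.sqrt (4 * (ρ ^ 2 + 1) * (deriv f ρ) ^ 2 - 4 * deriv f ρ + 1) := by
  have hne : ∀ ρ ∈ Ioo a b, ρ ≠ 0 := fun ρ hρ ↦ (ha.trans_lt hρ.1).ne'
  obtain ⟨c₁, hc₁⟩ := isOpen_Ioo.exists_eq_const_add_mul_of_hasDerivAt isPreconnected_Ioo
    fun ρ hρ ↦ hasDerivAt_slopeRatio_comp_of_curvature (hne ρ hρ)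
      (hf.hasDerivAt_deriv isOpen_Ioo hρ) (hH ρ hρ)
  refine ⟨c₁, fun ρ hρ ↦ ?_⟩
  have hv : c₁ - h * ρ / 2 = slopeRatio ρ (deriv f ρ) := by rw [hc₁ ρ hρ]; ring
  rw [hv]
  exact (slopeRatio_mul_sqrt_disc (hne ρ hρ) _).symm
end

section
/- Let C ∈ ℝ and let f(ρ) = (1/2)arctan(ρ) + C for ρ ∈ ℝ. Then for every ρ ≠ 0, the surface of revolution a = f(ρ) in the affine-additive group has horizontal Gauss curvature K(ρ) = −4 and horizontal mean curvature H(ρ) = 0. Explicitly, with f'(ρ) = 1/(2(ρ²+1)) and f''(ρ) = −ρ/(ρ²+1)², for all ρ ≠ 0 one has 4(2ρ f''(ρ)(2(ρ²+1)f'(ρ) − 1) − 4 f'(ρ)² + 4 f'(ρ) − 1) = −4·(4(ρ²+1)f'(ρ)² − 4 f'(ρ) + 1)² and ρ f''(ρ) + 4(ρ²+1)f'(ρ)³ − 6 f'(ρ)² + 2 f'(ρ) = 0. -/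
lemma aa_deriv1 (C : ℝ) (f : ℝ → ℝ)
    (hf : ∀ ρ, f ρ = (1 / 2) * Real.arctan ρ + C) :
    deriv f = fun ρ => 1 / (2 * (ρ ^ 2 + 1)) := by
  funext x
  have h : HasDerivAt f (1 / (2 * (x ^ 2 + 1))) x := by
    have h1 : HasDerivAt (fun ρ : ℝ => (1 / 2) * Real.arctan ρ + C)
        ((1 / 2) * (1 / (1 + x ^ 2))) x := by
      exact ((Real.hasDerivAt_arctan x).const_mul (1/2)).add_const C
    have : f = fun ρ : ℝ => (1 / 2) * Real.arctan ρ + C := funext hf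
    rw [this]
    convert h1 using 1
    field_simp
    ring
  exact h.deriv

/-- The surface of revolution `a = (1/2)arctan ρ + C` in the affine-additive
group has horizontal Gauss curvature `−4` and horizontal mean curvature `0`
at every noncharacteristic point `ρ ≠ 0`. -/
theorem aa_arctan_profile_curvatures (C : ℝ) (f : ℝ → ℝ)
    (hf : ∀ ρ, f ρ = (1 / 2) * Real.arctan ρ + C) :
    ∀ ρ : ℝ, ρ ≠ 0 →
      deriv f ρ = 1 / (2 * (ρ ^ 2 + 1)) ∧
      deriv (deriv f) ρ = -ρ / (ρ ^ 2 + 1) ^ 2 ∧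
      4 * (2 * ρ * deriv (deriv f) ρ * (2 * (ρ ^ 2 + 1) * deriv f ρ - 1) -
          4 * (deriv f ρ) ^ 2 + 4 * deriv f ρ - 1) =
        -4 * (4 * (ρ ^ 2 + 1) * (deriv f ρ) ^ 2 - 4 * deriv f ρ + 1) ^ 2 ∧
      ρ * deriv (deriv f) ρ + 4 * (ρ ^ 2 + 1) * (deriv f ρ) ^ 3 -
          6 * (deriv f ρ) ^ 2 + 2 * deriv f ρ = 0 := by
  intro ρ hρ
  have hd1 := aa_deriv1 C f hf
  have hne : (ρ : ℝ) ^ 2 + 1 ≠ 0 := by positivity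
  have hd2 : deriv (deriv f) ρ = -ρ / (ρ ^ 2 + 1) ^ 2 := by
    rw [hd1]
    have h : HasDerivAt (fun x : ℝ => 1 / (2 * (x ^ 2 + 1))) (-ρ / (ρ ^ 2 + 1) ^ 2) ρ := by
      have hx : HasDerivAt (fun x : ℝ => 2 * (x ^ 2 + 1)) (2 * (2 * ρ)) ρ := by
        simpa using (((hasDerivAt_pow 2 ρ).add_const 1).const_mul 2)
      have hne2 : 2 * (ρ ^ 2 + 1) ≠ 0 := by positivity
      have := hx.inv hne2
      have h1 : HasDerivAt (fun x : ℝ => (2 * (x ^ 2 + 1))⁻¹)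
          (-(2 * (2 * ρ)) / (2 * (ρ ^ 2 + 1)) ^ 2) ρ := this
      have heq : -(2 * (2 * ρ)) / (2 * (ρ ^ 2 + 1)) ^ 2 = -ρ / (ρ ^ 2 + 1) ^ 2 := by
        field_simp
      rw [heq] at h1
      simpa [one_div] using h1
    exact h.deriv
  have hd1' : deriv f ρ = 1 / (2 * (ρ ^ 2 + 1)) := by rw [hd1]
  refine ⟨hd1', hd2, ?_, ?_⟩ <;>
  · rw [hd2, hd1']
    field_simp
    ring
end
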